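/- arXiv:1302.4609 — 12 statements merged into one kernel-verified Lean document; each statement's English description precedes it below -/
import Mathlib

section
/- Let G be a graph and f a real-valued function on subsets of vertices satisfying: (a) f(∅)=0; (b) monotonicity f(A) ≥ f(B) for A ⊇ B; (c) submodularity f(A)+f(B) ≥ f(A∪B)+f(A∩B); (e) strict submodularity f(A)+f(B) ≥ f(A∪B)+f(A∩B)+1 whenever A and B each contain an edge of G but A∩B is an independent set. Then for every subset X of vertices that induces a connected subgraph, ∑_{v∈X} f({v}) ≥ f(X) + |X| − 2. -/
open scoped Classical

/-- A set of vertices is qualified if it contains both endpoints of an edge. -/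
def Qualified {V : Type*} (G : SimpleGraph V) (A : Finset V) : Prop :=
  ∃ u ∈ A, ∃ v ∈ A, G.Adj u v

/-!
Build a connected set `X` one vertex at a time, each new vertex `v` joined by an edge `uv` to the
connected set `S` built so far. Once `S` contains an edge, strict submodularity applied to `S`
and `{u, v}` (which meet in the independent set `{u}`) gives
`f (S ∪ {v}) + f {u} + 1 ≤ f S + f {u, v} ≤ f S + f {u} + f {v}`, so every vertex after the first
two gains one unit over plain subadditivity.
-/

section

open Finset

variable {V : Type*} {G : SimpleGraph V}

lemma qualified_of_connected_induce {S : Finset V} (hS : (G.induce (S : Set V)).Connected)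
    (hS2 : S.Nontrivial) : Qualified G S := by
  have : Nontrivial (S : Set V) := Set.nontrivial_coe_sort.mpr hS2
  obtain ⟨u⟩ := hS.nonempty
  obtain ⟨w, huw⟩ := hS.preconnected.exists_adj_of_nontrivial u
  exact ⟨u, u.2, w, w.2, huw⟩

lemma exists_adj_connected_induce_erase {X : Finset V} (hX : (G.induce (X : Set V)).Connected)
    (hX2 : X.Nontrivial) :
    ∃ v ∈ X, ∃ u ∈ X.erase v, G.Adj u v ∧ (G.induce (X.erase v : Set V)).Connected := by
  have : Nontrivial (X : Set V) := Set.nontrivial_coe_sort.mpr hX2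
  have : Finite (X : Set V) := X.finite_toSet
  obtain ⟨v, hv⟩ := hX.exists_connected_induce_compl_singleton_of_finite_nontrivial
  obtain ⟨u, hvu⟩ := hX.preconnected.exists_adj_of_nontrivial v
  refine ⟨v, v.2, u, mem_erase.mpr ⟨fun h => hvu.ne (Subtype.ext h).symm, u.2⟩, hvu.symm, ?_⟩
  let φ : (G.induce (X : Set V)).induce {v}ᶜ →g G.induce (X.erase v : Set V) :=
    { toFun := fun w => ⟨w.1.1, mem_erase.mpr ⟨fun h => w.2 (Subtype.ext h), w.1.2⟩⟩
      map_rel' := id }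
  refine hv.map φ fun w => ⟨⟨⟨w.1, (mem_erase.mp w.2).2⟩, fun h => ?_⟩, rfl⟩
  exact (mem_erase.mp w.2).1 (congrArg Subtype.val h)

variable (f : Finset V → ℝ)

lemma map_union_le_add_of_disjoint (ha : f ∅ = 0)
    (hc : ∀ A B : Finset V, f (A ∪ B) + f (A ∩ B) ≤ f A + f B) {A B : Finset V}
    (hAB : Disjoint A B) : f (A ∪ B) ≤ f A + f B := by
  simpa [disjoint_iff_inter_eq_empty.mp hAB, ha] using hc A B

lemma map_insert_add_one_le (ha : f ∅ = 0)
    (hc : ∀ A B : Finset V, f (A ∪ B) + f (A ∩ B) ≤ f A + f B)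
    (he : ∀ A B : Finset V, Qualified G A → Qualified G B → ¬ Qualified G (A ∩ B) →
      f (A ∪ B) + f (A ∩ B) + 1 ≤ f A + f B)
    {S : Finset V} {u v : V} (hS : Qualified G S) (hu : u ∈ S) (hv : v ∉ S) (huv : G.Adj u v) :
    f (insert v S) + 1 ≤ f S + f {v} := by
  have hinter : S ∩ {u, v} = {u} := by
    ext w; constructor
    · simp only [mem_inter, mem_insert, mem_singleton]; rintro ⟨hw, rfl | rfl⟩ <;> tauto
    · simp only [mem_singleton]; rintro rfl; simp [hu]
  have hunion : S ∪ {u, v} = insert v S := by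
    ext w; simp only [mem_union, mem_insert, mem_singleton]; grind
  have hedge : Qualified G {u, v} := ⟨u, by simp, v, by simp, huv⟩
  have hsingle : ¬ Qualified G {u} := by
    rintro ⟨x, hx, y, hy, hxy⟩
    rw [mem_singleton] at hx hy
    subst hx hy
    exact G.irrefl hxy
  have hstrict := he S {u, v} hS hedge (hinter ▸ hsingle)
  have hpair : f ({u} ∪ {v}) ≤ f {u} + f {v} :=
    map_union_le_add_of_disjoint f ha hc (disjoint_singleton.mpr huv.ne)
  rw [hinter, hunion] at hstrict
  rw [← insert_eq] at hpair
  linarith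

lemma map_add_card_le_sum_singleton_add_two (ha : f ∅ = 0)
    (hc : ∀ A B : Finset V, f (A ∪ B) + f (A ∩ B) ≤ f A + f B)
    (he : ∀ A B : Finset V, Qualified G A → Qualified G B → ¬ Qualified G (A ∩ B) →
      f (A ∪ B) + f (A ∩ B) + 1 ≤ f A + f B)
    (X : Finset V) (hX : (G.induce (X : Set V)).Connected) :
    f X + #X ≤ ∑ v ∈ X, f {v} + 2 := by
  induction X using Finset.strongInduction with
  | H X ih =>
  have hXne : X.Nonempty := coe_nonempty.mp (Set.nonempty_coe_sort.mp hX.nonempty)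
  rcases hXne.exists_eq_singleton_or_nontrivial with ⟨w, rfl⟩ | hX2
  · simp
  obtain ⟨v, hvX, u, huS, huv, hS⟩ := exists_adj_connected_induce_erase hX hX2
  set S := X.erase v
  have hvS : v ∉ S := notMem_erase v X
  have hXS : X = insert v S := (insert_erase hvX).symm
  have hsum : ∑ w ∈ X, f {w} = f {v} + ∑ w ∈ S, f {w} := (add_sum_erase X _ hvX).symm
  have hcard : (#X : ℝ) = #S + 1 := by rw [hXS, card_insert_of_notMem hvS]; push_cast; ring
  rw [hsum, hcard]
  rcases Nonempty.exists_eq_singleton_or_nontrivial ⟨u, huS⟩ with ⟨w, hSw⟩ | hS2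
  · have hsplit : f X ≤ f {v} + f S := by
      rw [hXS, insert_eq]
      exact map_union_le_add_of_disjoint f ha hc (disjoint_singleton_left.mpr hvS)
    rw [hSw] at hsplit
    rw [hSw, sum_singleton, card_singleton, Nat.cast_one]
    linarith
  · have := ih S (erase_ssubset hvX) hS
    have := map_insert_add_one_le f ha hc he (qualified_of_connected_induce hS hS2) huS hvS huv
    rw [← hXS] at this
    linarith

end

theorem sum_singletons_ge_connected_general {V : Type*} (G : SimpleGraph V)
    (f : Finset V → ℝ)
    (ha : f ∅ = 0)
    (hc : ∀ A B : Finset V, f (A ∪ B) + f (A ∩ B) ≤ f A + f B)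
    (he : ∀ A B : Finset V, Qualified G A → Qualified G B → ¬ Qualified G (A ∩ B) →
      f (A ∪ B) + f (A ∩ B) + 1 ≤ f A + f B)
    (X : Finset V) (hX : (G.induce (X : Set V)).Connected) :
    f X + (X.card : ℝ) - 2 ≤ ∑ v ∈ X, f {v} := by
  have := map_add_card_le_sum_singleton_add_two f ha hc he X hX
  linarith

/-- entropy-method inequality for connected induced subsets. -/
theorem sum_singletons_ge_connected {V : Type*} (G : SimpleGraph V)
    (f : Finset V → ℝ)
    (ha : f ∅ = 0)
    (hb : ∀ A B : Finset V, B ⊆ A → f B ≤ f A)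
    (hc : ∀ A B : Finset V, f (A ∪ B) + f (A ∩ B) ≤ f A + f B)
    (he : ∀ A B : Finset V, Qualified G A → Qualified G B → ¬ Qualified G (A ∩ B) →
      f (A ∪ B) + f (A ∩ B) + 1 ≤ f A + f B)
    (X : Finset V) (hX : (G.induce (X : Set V)).Connected) (hcard : 2 ≤ X.card) :
    f X + (X.card : ℝ) - 2 ≤ ∑ v ∈ X, f {v} :=
  sum_singletons_ge_connected_general G f ha hc he X hX
end

section
/- Let G be a finite simple graph and f a function on vertex subsets satisfying properties (a)–(e) of the entropy method: f(∅)=0; monotonicity; submodularity; f(A) ≥ f(B)+1 when A ⊇ B, A is qualified and B is not; f(A)+f(B) ≥ f(A∪B)+f(A∩B)+1 when A, B are qualified but A∩B is not. If X is a core of G with |X| ≥ 2, and the independent sequence bound f(X) ≥ |X|+1 holds, then ∑_{v∈X} f({v}) ≥ 2|X| − 1. -/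
open scoped Classical

/-- A core of a graph `G`: `X` induces a connected subgraph and for each
`x ∈ X` there is a neighbor `x' ∉ X` whose only neighbor in `X` is `x`, with
the set of chosen outside neighbors independent. -/
def IsCore {V : Type*} (G : SimpleGraph V) (X : Finset V) : Prop :=
  (G.induce (X : Set V)).Connected ∧
    ∃ g : V → V,
      (∀ x ∈ X, g x ∉ X ∧ G.Adj x (g x) ∧ ∀ y ∈ X, G.Adj y (g x) → y = x) ∧
      (∀ x ∈ X, ∀ y ∈ X, ¬ G.Adj (g x) (g y))

/-!
Start from an edge `{a, b}` inside `X`, for which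
`f {a, b} ≤ f {a} + f {b}`, and add the remaining vertices of `X` one at a time, each adjacent
to the part already built. Property (e), applied to the current qualified set `S` and the new
edge `{u, v}` (meeting `S` in the unqualified `{u}`), shows that each added vertex `v` costs
`f {v}` but gains at least `1`: `f (insert v S) + 1 ≤ f S + f {v}`. Summing,
`f X + (|X| - 2) ≤ ∑_{v ∈ X} f {v}`, and `f X ≥ |X| + 1` finishes.
-/

section

variable {V : Type*} {G : SimpleGraph V}

namespace Qualified

theorem not_singleton (u : V) : ¬ Qualified G {u} := by
  rintro ⟨a, ha, b, hb, hab⟩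
  rw [Finset.mem_singleton] at ha hb
  subst ha hb
  exact G.loopless.irrefl _ hab

theorem pair {u v : V} (h : G.Adj u v) : Qualified G {u, v} :=
  ⟨u, by simp, v, by simp, h⟩

theorem mono {A B : Finset V} (hA : Qualified G A) (hAB : A ⊆ B) : Qualified G B := by
  obtain ⟨u, hu, v, hv, huv⟩ := hA
  exact ⟨u, hAB hu, v, hAB hv, huv⟩

theorem nonempty {A : Finset V} (hA : Qualified G A) : A.Nonempty := by
  obtain ⟨u, hu, -⟩ := hA
  exact ⟨u, hu⟩

end Qualified

theorem exists_adj_sdiff_of_connected_induce {X S : Finset V}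
    (hconn : (G.induce (X : Set V)).Connected) (hSX : S ⊂ X) (hS : S.Nonempty) :
    ∃ u ∈ S, ∃ v ∈ X \ S, G.Adj u v := by
  obtain ⟨a, ha⟩ := hS
  obtain ⟨b, hbX, hbS⟩ := Finset.exists_of_ssubset hSX
  obtain ⟨w⟩ := hconn.preconnected ⟨a, hSX.subset ha⟩ ⟨b, hbX⟩
  obtain ⟨d, -, hd₁, hd₂⟩ := w.exists_boundary_dart {x | x.1 ∈ S} ha hbS
  exact ⟨d.fst, hd₁, d.snd, Finset.mem_sdiff.mpr ⟨d.snd.2, hd₂⟩, d.adj⟩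

theorem exists_adj_of_connected_induce {X : Finset V}
    (hconn : (G.induce (X : Set V)).Connected) (hX : 1 < X.card) :
    ∃ a ∈ X, ∃ b ∈ X, G.Adj a b := by
  obtain ⟨c, hc⟩ := Finset.card_pos.mp (by omega : 0 < X.card)
  have h_ssubset : {c} ⊂ X := (Finset.singleton_subset_iff.mpr hc).ssubset_of_ne
    fun h ↦ by simp [← h] at hX
  obtain ⟨a, ha, b, hb, hab⟩ :=
    exists_adj_sdiff_of_connected_induce hconn h_ssubset (Finset.singleton_nonempty c)
  exact ⟨a, h_ssubset.subset ha, b, (Finset.mem_sdiff.mp hb).1, hab⟩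

theorem union_le_add_of_disjoint (f : Finset V → ℝ) (h_empty : f ∅ = 0)
    (h_submod : ∀ A B : Finset V, f (A ∪ B) + f (A ∩ B) ≤ f A + f B)
    {A B : Finset V} (hAB : Disjoint A B) : f (A ∪ B) ≤ f A + f B := by
  have := h_submod A B
  rwa [Finset.disjoint_iff_inter_eq_empty.mp hAB, h_empty, add_zero] at this

theorem insert_add_one_le_of_adj (f : Finset V → ℝ) (h_empty : f ∅ = 0)
    (h_submod : ∀ A B : Finset V, f (A ∪ B) + f (A ∩ B) ≤ f A + f B)
    (h_qual : ∀ A B : Finset V, Qualified G A → Qualified G B → ¬ Qualified G (A ∩ B) →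
      f (A ∪ B) + f (A ∩ B) + 1 ≤ f A + f B)
    {S : Finset V} {u v : V} (hS : Qualified G S) (hu : u ∈ S) (hv : v ∉ S)
    (huv : G.Adj u v) :
    f (insert v S) + 1 ≤ f S + f {v} := by
  have h_union : S ∪ {u, v} = insert v S := by
    ext x; simp only [Finset.mem_union, Finset.mem_insert, Finset.mem_singleton]; grind
  have h_inter : S ∩ {u, v} = {u} := by
    ext x; simp only [Finset.mem_inter, Finset.mem_insert, Finset.mem_singleton]; grind
  have h_edge := h_qual S {u, v} hS (.pair huv) (h_inter ▸ Qualified.not_singleton u)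
  rw [h_union, h_inter] at h_edge
  have h_pair : f {u, v} ≤ f {u} + f {v} :=
    union_le_add_of_disjoint f h_empty h_submod (Finset.disjoint_singleton.mpr huv.ne)
  linarith

theorem add_card_sdiff_le_add_sum (f : Finset V → ℝ) (h_empty : f ∅ = 0)
    (h_submod : ∀ A B : Finset V, f (A ∪ B) + f (A ∩ B) ≤ f A + f B)
    (h_qual : ∀ A B : Finset V, Qualified G A → Qualified G B → ¬ Qualified G (A ∩ B) →
      f (A ∪ B) + f (A ∩ B) + 1 ≤ f A + f B)
    {X : Finset V} (hconn : (G.induce (X : Set V)).Connected) {S : Finset V} (hSX : S ⊆ X)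
    (hS : Qualified G S) :
    f X + (X \ S).card ≤ f S + ∑ v ∈ X \ S, f {v} := by
  induction h : (X \ S).card generalizing S with
  | zero =>
    obtain rfl : S = X := hSX.antisymm (Finset.sdiff_eq_empty_iff_subset.mp
      (Finset.card_eq_zero.mp h))
    simp
  | succ k ih =>
    obtain ⟨u, hu, v, hv, huv⟩ := exists_adj_sdiff_of_connected_induce hconn
      (hSX.ssubset_of_ne (by rintro rfl; simp at h)) hS.nonempty
    obtain ⟨hvX, hvS⟩ := Finset.mem_sdiff.mp hv
    have h_sdiff : X \ insert v S = (X \ S).erase v := Finset.sdiff_insert X S v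
    have h_step := insert_add_one_le_of_adj f h_empty h_submod h_qual hS hu hvS huv
    have h_rest := ih (Finset.insert_subset hvX hSX) (hS.mono (Finset.subset_insert v S))
      (by rw [h_sdiff, Finset.card_erase_of_mem hv, h]; rfl)
    rw [h_sdiff] at h_rest
    rw [← Finset.add_sum_erase _ _ hv]
    push_cast
    linarith

end

theorem sum_singletons_ge_core_general {V : Type*} (G : SimpleGraph V)
    (f : Finset V → ℝ)
    (ha : f ∅ = 0)
    (hc : ∀ A B : Finset V, f (A ∪ B) + f (A ∩ B) ≤ f A + f B)
    (he : ∀ A B : Finset V, Qualified G A → Qualified G B → ¬ Qualified G (A ∩ B) →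
      f (A ∪ B) + f (A ∩ B) + 1 ≤ f A + f B)
    (X : Finset V) (hX : IsCore G X) (hcard : 2 ≤ X.card)
    (hseq : (X.card : ℝ) + 1 ≤ f X) :
    2 * (X.card : ℝ) - 1 ≤ ∑ v ∈ X, f {v} := by
  obtain ⟨hconn, -⟩ := hX
  obtain ⟨a, haX, b, hbX, hab⟩ := exists_adj_of_connected_induce hconn hcard
  have h_edge : {a, b} ⊆ X := Finset.insert_subset haX (Finset.singleton_subset_iff.mpr hbX)
  have h_build := add_card_sdiff_le_add_sum f ha hc he hconn h_edge (.pair hab)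
  have h_pair : f {a, b} ≤ f {a} + f {b} :=
    union_le_add_of_disjoint f ha hc (Finset.disjoint_singleton.mpr hab.ne)
  have h_card : ((X \ {a, b}).card : ℝ) + 2 = X.card := by
    have := Finset.card_sdiff_add_card_eq_card h_edge
    rw [Finset.card_pair hab.ne] at this
    exact_mod_cast this
  rw [← Finset.sum_sdiff h_edge, Finset.sum_pair hab.ne]
  linarith

/-- on a core `X` with `|X| ≥ 2`, assuming the independent
sequence bound `f(X) ≥ |X| + 1`, we get `∑_{v ∈ X} f({v}) ≥ 2|X| - 1`. -/
theorem sum_singletons_ge_core {V : Type*} (G : SimpleGraph V)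
    (f : Finset V → ℝ)
    (ha : f ∅ = 0)
    (hb : ∀ A B : Finset V, B ⊆ A → f B ≤ f A)
    (hc : ∀ A B : Finset V, f (A ∪ B) + f (A ∩ B) ≤ f A + f B)
    (hd : ∀ A B : Finset V, B ⊆ A → Qualified G A → ¬ Qualified G B →
      f B + 1 ≤ f A)
    (he : ∀ A B : Finset V, Qualified G A → Qualified G B → ¬ Qualified G (A ∩ B) →
      f (A ∪ B) + f (A ∩ B) + 1 ≤ f A + f B)
    (X : Finset V) (hX : IsCore G X) (hcard : 2 ≤ X.card)
    (hseq : (X.card : ℝ) + 1 ≤ f X) :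
    2 * (X.card : ℝ) - 1 ≤ ∑ v ∈ X, f {v} :=
  sum_singletons_ge_core_general G f ha hc he X hX hcard hseq
end

section
/- In a tree G, a nonempty subset X of the vertices is a core (i.e., G[X] is connected, and each x ∈ X has a neighbor x' ∉ X whose only neighbor in X is x, with {x' : x ∈ X} independent) if and only if G[X] is connected and every x ∈ X has at least one neighbor outside X. -/
/-!
In an acyclic graph every edge is a bridge. If `X` induces a connected subgraph, its vertices stay
connected after deleting any edge with an endpoint outside `X`. So a vertex `x' ∉ X` adjacent to
two vertices of `X`, or an edge `x'y'` outside `X` whose ends both have neighbours in `X`, would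
yield a detour around an edge, which is impossible. Hence any choice of outside neighbours
`x ↦ x'` satisfies the last two conditions of a core.
-/

open scoped Classical

namespace SimpleGraph

variable {V : Type*} {G : SimpleGraph V} {s : Set V}

lemma reachable_deleteEdges_of_induce_connected (hs : (G.induce s).Connected) {u v a b : V}
    (hu : u ∉ s) (ha : a ∈ s) (hb : b ∈ s) : (G.deleteEdges {s(u, v)}).Reachable a b := by
  let f : G.induce s →g G.deleteEdges {s(u, v)} :=
    { toFun := Subtype.val
      map_rel' := fun {x y} hxy => by
        refine deleteEdges_adj.2 ⟨hxy, ?_⟩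
        intro h
        rcases Sym2.eq_iff.1 h with ⟨rfl, -⟩ | ⟨-, rfl⟩
        · exact hu x.2
        · exact hu y.2 }
  exact (hs ⟨a, ha⟩ ⟨b, hb⟩).map f

lemma IsAcyclic.eq_of_adj_of_adj_of_induce_connected (hG : G.IsAcyclic)
    (hs : (G.induce s).Connected) {u a b : V} (hu : u ∉ s) (ha : a ∈ s) (hb : b ∈ s)
    (hau : G.Adj a u) (hbu : G.Adj b u) : a = b := by
  by_contra hab
  refine isBridge_iff.1 (isAcyclic_iff_forall_adj_isBridge.1 hG hau.symm) ?_
  have hub : (G.deleteEdges {s(u, a)}).Adj u b :=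
    deleteEdges_adj.2 ⟨hbu.symm, by grind [Sym2.eq_iff]⟩
  exact hub.reachable.trans (reachable_deleteEdges_of_induce_connected hs hu hb ha)

lemma IsAcyclic.not_adj_of_adj_of_adj_of_induce_connected (hG : G.IsAcyclic)
    (hs : (G.induce s).Connected) {u w a b : V} (hu : u ∉ s) (hw : w ∉ s) (ha : a ∈ s)
    (hb : b ∈ s) (hau : G.Adj a u) (hbw : G.Adj b w) : ¬G.Adj u w := by
  intro huw
  refine isBridge_iff.1 (isAcyclic_iff_forall_adj_isBridge.1 hG huw) ?_
  have hua : (G.deleteEdges {s(u, w)}).Adj u a :=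
    deleteEdges_adj.2 ⟨hau.symm, by grind [Sym2.eq_iff]⟩
  have hbw' : (G.deleteEdges {s(u, w)}).Adj b w :=
    deleteEdges_adj.2 ⟨hbw, by grind [Sym2.eq_iff]⟩
  exact hua.reachable.trans
    ((reachable_deleteEdges_of_induce_connected hs hu ha hb).trans hbw'.reachable)

end SimpleGraph

theorem isCore_iff_of_tree_general {V : Type*} (G : SimpleGraph V) (hG : G.IsTree)
    (X : Finset V) :
    IsCore G X ↔
      (G.induce (X : Set V)).Connected ∧ ∀ x ∈ X, ∃ y, y ∉ X ∧ G.Adj x y := by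
  constructor
  · rintro ⟨hconn, g, hg, -⟩
    exact ⟨hconn, fun x hx => ⟨g x, (hg x hx).1, (hg x hx).2.1⟩⟩
  rintro ⟨hconn, hout⟩
  choose! g hgX hgadj using hout
  refine ⟨hconn, g, fun x hx => ⟨hgX x hx, hgadj x hx, fun y hy hyg => ?_⟩,
    fun x hx y hy => ?_⟩
  · exact hG.isAcyclic.eq_of_adj_of_adj_of_induce_connected hconn (hgX x hx) hy hx hyg
      (hgadj x hx)
  · exact hG.isAcyclic.not_adj_of_adj_of_adj_of_induce_connected hconn (hgX x hx) (hgX y hy)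
      hx hy (hgadj x hx) (hgadj y hy)

/-- in a tree, a nonempty vertex set is a core iff it induces a
connected subgraph and each of its vertices has a neighbor outside the set. -/
theorem isCore_iff_of_tree {V : Type*} (G : SimpleGraph V) (hG : G.IsTree)
    (X : Finset V) (hne : X.Nonempty) :
    IsCore G X ↔
      (G.induce (X : Set V)).Connected ∧ ∀ x ∈ X, ∃ y, y ∉ X ∧ G.Adj x y :=
  isCore_iff_of_tree_general G hG X
end

section
/- Let G be a finite tree with at least 2 vertices in which every core has size at most c (c ≥ 1). Then there exists a star packing of G, i.e., a multiset of star subgraphs of G with positive integer multiplicities, such that every edge of G is covered exactly c times and every vertex of G is covered at most 2c−1 times. -/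
open scoped Classical

/-- A tree core: `X` induces a connected subgraph and every vertex of `X` has a
neighbor outside `X`. -/
def IsTreeCore {V : Type*} (G : SimpleGraph V) (X : Finset V) : Prop :=
  (G.induce (X : Set V)).Connected ∧ ∀ x ∈ X, ∃ y, y ∉ X ∧ G.Adj x y

/-- A star subgraph of `G`: a center vertex with a nonempty set of neighbors. -/
structure GraphStar {V : Type*} (G : SimpleGraph V) where
  center : V
  leaves : Finset V
  nonempty : leaves.Nonempty
  adj : ∀ u ∈ leaves, G.Adj center u

/-- The star contains the vertex `v`. -/
def GraphStar.memV {V : Type*} {G : SimpleGraph V} (S : GraphStar G) (v : V) : Prop :=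
  v = S.center ∨ v ∈ S.leaves

/-- The star contains the edge `uv`. -/
def GraphStar.memE {V : Type*} {G : SimpleGraph V} (S : GraphStar G) (u v : V) : Prop :=
  (u = S.center ∧ v ∈ S.leaves) ∨ (v = S.center ∧ u ∈ S.leaves)

/-!
Root the tree at `r` and set `μ v = 0` at a leaf and `μ v = 1 + ∑ μ w - min μ w` otherwise,
over the children `w` of `v`. Gluing to `v` the sets found for all children but one of
minimal `μ` shows that `μ v` is the size of a connected set hanging from `v` in which every
vertex has a neighbour below it outside the set. Hence the core bound gives `μ v ≤ c` (the
omitted child is the outside neighbour of `v`) and, gluing the sets of all children of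
`v ≠ r` with the parent as outside neighbour, `1 + ∑ μ w ≤ c`.

Cover the edge from `v` to a child `u` `c - μ u` times by stars centred at `v` and `μ u`
times by stars centred at `u`. The stars centred at a vertex are nested, the `t`-th one
made of the edges of weight `> t`, so a vertex is the centre of as many stars as its largest
weight; adding up gives at most `2c - 1` stars through every vertex.
-/

namespace GraphStar

variable {V : Type*} {G : SimpleGraph V}

lemma ite_memE_eq {a b : V} (S : GraphStar G) (hab : a ≠ b) :
    (if S.memE a b then 1 else 0) =
      (if a = S.center ∧ b ∈ S.leaves then 1 else 0) +
        (if b = S.center ∧ a ∈ S.leaves then 1 else 0) := by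
  unfold GraphStar.memE
  split_ifs <;> simp_all

lemma ite_memV_eq (S : GraphStar G) (x : V) :
    (if S.memV x then 1 else 0) =
      (if x = S.center then 1 else 0) + (if x ∈ S.leaves then 1 else 0) := by
  have : x ∈ S.leaves → x ≠ S.center := fun h => (S.adj x h).ne'
  unfold GraphStar.memV
  split_ifs <;> simp_all

end GraphStar

namespace StarPacking

open SimpleGraph Finset

lemma sum_fin_ite_lt {N k : ℕ} (hk : k ≤ N) :
    ∑ t : Fin N, (if (t : ℕ) < k then 1 else 0) = k := by
  rw [Finset.sum_boole, Fin.card_filter_val_lt]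
  simpa using hk

noncomputable section LevelStars

variable {V : Type*} [Fintype V] (G : SimpleGraph V) (w : V → V → ℕ)

def levelLeaves (v : V) (t : ℕ) : Finset V := {u ∈ G.neighborFinset v | t < w v u}

abbrev LevelIndex := Σ v : V, Fin ((G.neighborFinset v).sup (w v))

def levelStar (p : LevelIndex G w) : GraphStar G where
  center := p.1
  leaves := levelLeaves G w p.1 p.2
  nonempty := by
    obtain ⟨u, hu, hlt⟩ := Finset.lt_sup_iff.mp p.2.isLt
    exact ⟨u, mem_filter.mpr ⟨hu, hlt⟩⟩
  adj _ hu := (mem_neighborFinset ..).mp (mem_filter.mp hu).1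

variable {G}

lemma mem_levelLeaves {v u : V} {t : ℕ} :
    u ∈ levelLeaves G w v t ↔ G.Adj v u ∧ t < w v u := by
  simp [levelLeaves]

lemma sum_levelStar_center_eq (v : V) :
    ∑ p : LevelIndex G w, (if v = (levelStar G w p).center then 1 else 0) =
      (G.neighborFinset v).sup (w v) := by
  rw [Fintype.sum_sigma, Fintype.sum_eq_single v fun u hu => by simp [levelStar, Ne.symm hu]]
  simp [levelStar]

lemma sum_levelStar_center_leaf {v u : V} (h : G.Adj v u) :
    ∑ p : LevelIndex G w,
      (if v = (levelStar G w p).center ∧ u ∈ (levelStar G w p).leaves then 1 else 0) =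
        w v u := by
  rw [Fintype.sum_sigma, Fintype.sum_eq_single v fun x hx => by simp [levelStar, Ne.symm hx]]
  simp only [levelStar, mem_levelLeaves, h, true_and]
  exact sum_fin_ite_lt (le_sup ((mem_neighborFinset ..).mpr h))

lemma sum_levelStar_leaf (x : V) :
    ∑ p : LevelIndex G w, (if x ∈ (levelStar G w p).leaves then 1 else 0) =
      ∑ u ∈ G.neighborFinset x, w u x := by
  rw [Fintype.sum_sigma, neighborFinset_eq_filter, sum_filter]
  refine sum_congr rfl fun u _ => ?_
  by_cases h : G.Adj u x
  · simp only [levelStar, mem_levelLeaves, h, true_and, G.adj_comm x u]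
    exact sum_fin_ite_lt (le_sup ((mem_neighborFinset ..).mpr h))
  · simp [levelStar, mem_levelLeaves, h, G.adj_comm x u]

variable (G) in
theorem exists_star_family_of_weights :
    ∃ (n : ℕ) (st : Fin n → GraphStar G),
      (∀ a b, G.Adj a b → ∑ i, (if (st i).memE a b then 1 else 0) = w a b + w b a) ∧
      ∀ x, ∑ i, (if (st i).memV x then 1 else 0) =
        (G.neighborFinset x).sup (w x) + ∑ u ∈ G.neighborFinset x, w u x := by
  set e := Fintype.equivFin (LevelIndex G w)
  refine ⟨_, fun i => levelStar G w (e.symm i), fun a b hab => ?_, fun x => ?_⟩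
  · rw [Equiv.sum_comp e.symm (fun p => if (levelStar G w p).memE a b then 1 else 0)]
    rw [sum_congr rfl fun p _ => (levelStar G w p).ite_memE_eq hab.ne, sum_add_distrib,
      sum_levelStar_center_leaf w hab, sum_levelStar_center_leaf w hab.symm]
  · rw [Equiv.sum_comp e.symm (fun p => if (levelStar G w p).memV x then 1 else 0)]
    rw [sum_congr rfl fun p _ => (levelStar G w p).ite_memV_eq x, sum_add_distrib,
      sum_levelStar_center_eq, sum_levelStar_leaf]

end LevelStars

noncomputable section RootedTree

variable {V : Type*} {G : SimpleGraph V} {r : V}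

lemma eq_of_adj_of_dist_add_one_eq (hG : G.IsTree) {v w₁ w₂ u : V}
    (h₁ : G.Adj v w₁) (h₂ : G.Adj v w₂)
    (hd₁ : G.dist w₁ u + 1 = G.dist v u) (hd₂ : G.dist w₂ u + 1 = G.dist v u) :
    w₁ = w₂ := by
  obtain ⟨q₁, hq₁⟩ := (hG.connected w₁ u).exists_walk_length_eq_dist
  obtain ⟨q₂, hq₂⟩ := (hG.connected w₂ u).exists_walk_length_eq_dist
  have hp₁ : (Walk.cons h₁ q₁).IsPath :=
    Walk.isPath_of_length_eq_dist _ (by simp [hq₁, hd₁])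
  have hp₂ : (Walk.cons h₂ q₂).IsPath :=
    Walk.isPath_of_length_eq_dist _ (by simp [hq₂, hd₂])
  have := (hG.isAcyclic.subsingleton_path v u).elim ⟨_, hp₁⟩ ⟨_, hp₂⟩
  simpa using congrArg (fun p : G.Path v u => p.1.snd) this

variable (G r) in
def IsDescendant (v u : V) : Prop :=
  G.dist r u = G.dist r v + G.dist v u

lemma isDescendant_refl (v : V) : IsDescendant G r v v := by
  simp [IsDescendant]

lemma IsDescendant.dist_le {v u : V} (h : IsDescendant G r v u) : G.dist r v ≤ G.dist r u :=
  h ▸ Nat.le_add_right _ _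

lemma IsDescendant.trans (hG : G.Connected) {v x u : V} (h₁ : IsDescendant G r v x)
    (h₂ : IsDescendant G r x u) : IsDescendant G r v u := by
  have t₁ : G.dist r u ≤ G.dist r v + G.dist v u := hG.dist_triangle
  have t₂ : G.dist v u ≤ G.dist v x + G.dist x u := hG.dist_triangle
  unfold IsDescendant at *
  omega

lemma exists_parent (hG : G.IsTree) {v : V} (hv : v ≠ r) :
    ∃ p, G.Adj v p ∧ G.dist r p + 1 = G.dist r v := by
  obtain ⟨q, hq⟩ := (hG.connected v r).exists_walk_length_eq_dist
  have hq' : ¬ q.Nil := q.not_nil_of_ne hv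
  have hle : G.dist q.snd r ≤ q.tail.length := dist_le _
  have := q.length_tail_add_one hq'
  have := hG.dist_eq_dist_add_one_of_adj r (q.adj_snd hq')
  rw [SimpleGraph.dist_comm] at hq hle
  exact ⟨q.snd, q.adj_snd hq', by omega⟩

variable (G r) in
structure IsCoreBelow (v : V) (X : Finset V) : Prop where
  isDescendant : ∀ x ∈ X, IsDescendant G r v x
  connected_of_nonempty : X.Nonempty → v ∈ X ∧ (G.induce (X : Set V)).Connected
  exists_adj_notMem : ∀ x ∈ X, ∃ y, G.Adj x y ∧ IsDescendant G r x y ∧ y ∉ X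

lemma notMem_insert_biUnion {v y : V} {s : Finset V} {F : V → Finset V}
    (hF : ∀ w ∈ s, IsCoreBelow G r w (F w)) (hyv : y ≠ v)
    (hy : ∀ w ∈ s, ¬ IsDescendant G r w y) :
    y ∉ insert v (s.biUnion F) := by
  simp only [mem_insert, mem_biUnion, not_or, not_exists, not_and]
  exact ⟨hyv, fun w hw hyw => hy w hw ((hF w hw).isDescendant y hyw)⟩

variable [Fintype V]

variable (G r) in
def children (v : V) : Finset V := {u ∈ G.neighborFinset v | G.dist r u = G.dist r v + 1}

lemma mem_children {v u : V} :
    u ∈ children G r v ↔ G.Adj v u ∧ G.dist r u = G.dist r v + 1 := by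
  simp [children]

lemma isDescendant_of_mem_children {v w : V} (hw : w ∈ children G r v) :
    IsDescendant G r v w := by
  rw [mem_children] at hw
  rw [IsDescendant, hw.2, dist_eq_one_iff_adj.mpr hw.1]

lemma dist_add_one_eq_of_mem_children (hG : G.Connected) {v w u : V} (hw : w ∈ children G r v)
    (h : IsDescendant G r w u) : G.dist w u + 1 = G.dist v u := by
  have t₁ : G.dist r u ≤ G.dist r v + G.dist v u := hG.dist_triangle
  have t₂ : G.dist v u ≤ G.dist v w + G.dist w u := hG.dist_triangle
  rw [mem_children] at hw
  rw [dist_eq_one_iff_adj.mpr hw.1] at t₂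
  unfold IsDescendant at h
  omega

lemma eq_of_isDescendant_of_mem_children (hG : G.IsTree) {v w₁ w₂ u : V}
    (hw₁ : w₁ ∈ children G r v) (hw₂ : w₂ ∈ children G r v)
    (h₁ : IsDescendant G r w₁ u) (h₂ : IsDescendant G r w₂ u) : w₁ = w₂ :=
  eq_of_adj_of_dist_add_one_eq hG (mem_children.mp hw₁).1 (mem_children.mp hw₂).1
    (dist_add_one_eq_of_mem_children hG.connected hw₁ h₁)
    (dist_add_one_eq_of_mem_children hG.connected hw₂ h₂)

lemma neighborFinset_eq_insert_children (hG : G.IsTree) {v p : V} (hp : G.Adj v p)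
    (hdp : G.dist r p + 1 = G.dist r v) : G.neighborFinset v = insert p (children G r v) := by
  ext u
  rw [mem_neighborFinset, mem_insert, mem_children]
  refine ⟨fun h => ?_, by rintro (rfl | h) <;> simp_all⟩
  rcases hG.dist_eq_dist_add_one_of_adj r h with hd | hd
  · refine Or.inl (eq_of_adj_of_dist_add_one_eq (u := r) hG h hp ?_ ?_) <;>
    rw [SimpleGraph.dist_comm (v := r), SimpleGraph.dist_comm (v := r)] <;> omega
  · exact Or.inr ⟨h, hd⟩

lemma neighborFinset_root_eq_children (hG : G.IsTree) : G.neighborFinset r = children G r r := by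
  ext u
  rw [mem_neighborFinset, mem_children]
  refine ⟨fun h => ⟨h, ?_⟩, And.left⟩
  have := hG.dist_eq_dist_add_one_of_adj r h
  simp only [dist_self] at this ⊢
  omega

lemma dist_lt_card_of_mem_children {v w : V} (hw : w ∈ children G r v) :
    G.dist r w < Fintype.card V := by
  obtain ⟨p, hp, hl⟩ := (Reachable.of_dist_ne_zero (by rw [(mem_children.mp hw).2]; omega :
    G.dist r w ≠ 0)).exists_path_of_dist
  exact hl ▸ hp.length_lt

variable (G r) in
def mu (v : V) : ℕ :=
  if h : (children G r v).Nonempty then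
    1 + ∑ w ∈ (children G r v).attach, mu w.1 -
      (children G r v).attach.inf' (attach_nonempty_iff.mpr h) (fun w => mu w.1)
  else 0
termination_by Fintype.card V - G.dist r v
decreasing_by
  all_goals
    have := (mem_children.mp w.2).2
    have := dist_lt_card_of_mem_children w.2
    omega

lemma mu_eq_zero {v : V} (h : children G r v = ∅) : mu G r v = 0 := by
  rw [mu, dif_neg (not_nonempty_iff_eq_empty.mpr h)]

lemma exists_mu_eq_one_add_sum_erase {v : V} (h : (children G r v).Nonempty) :
    ∃ w₀ ∈ children G r v, (∀ w ∈ children G r v, mu G r w₀ ≤ mu G r w) ∧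
      mu G r v = 1 + ∑ w ∈ (children G r v).erase w₀, mu G r w := by
  obtain ⟨w₀, -, he⟩ := exists_mem_eq_inf' (attach_nonempty_iff.mpr h) (fun w => mu G r w.1)
  refine ⟨w₀, w₀.2, fun w hw => he ▸ inf'_le _ (mem_attach _ ⟨w, hw⟩), ?_⟩
  rw [mu, dif_pos h, sum_attach (children G r v) (mu G r), he,
    ← add_sum_erase _ _ w₀.2]
  omega

lemma not_isDescendant_of_mem_erase (hG : G.IsTree) {v w w₀ : V} (hw₀ : w₀ ∈ children G r v)
    (hw : w ∈ (children G r v).erase w₀) : ¬ IsDescendant G r w w₀ := fun h =>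
  ne_of_mem_erase hw
    (eq_of_isDescendant_of_mem_children hG (mem_of_mem_erase hw) hw₀ h (isDescendant_refl w₀))

section Graft

variable {v : V} {s : Finset V} {F : V → Finset V} (hs : s ⊆ children G r v)
  (hF : ∀ w ∈ s, IsCoreBelow G r w (F w))
include hs hF

lemma card_insert_biUnion (hG : G.IsTree) :
    #(insert v (s.biUnion F)) = 1 + ∑ w ∈ s, #(F w) := by
  have hv : v ∉ s.biUnion F := by
    simp only [mem_biUnion, not_exists, not_and]
    intro w hw hvw
    have := ((hF w hw).isDescendant v hvw).dist_le
    have := (mem_children.mp (hs hw)).2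
    omega
  have hdisj : (s : Set V).PairwiseDisjoint F := fun w₁ hw₁ w₂ hw₂ hne =>
    disjoint_left.mpr fun x h₁ h₂ => hne <| eq_of_isDescendant_of_mem_children hG (hs hw₁)
      (hs hw₂) ((hF w₁ hw₁).isDescendant x h₁) ((hF w₂ hw₂).isDescendant x h₂)
  rw [card_insert_of_notMem hv, card_biUnion hdisj, add_comm]

lemma isDescendant_of_mem_insert_biUnion (hG : G.Connected) {x : V}
    (hx : x ∈ insert v (s.biUnion F)) : IsDescendant G r v x := by
  rcases mem_insert.mp hx with rfl | hx
  · exact isDescendant_refl x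
  obtain ⟨w, hw, hxw⟩ := mem_biUnion.mp hx
  exact (isDescendant_of_mem_children (hs hw)).trans hG ((hF w hw).isDescendant x hxw)

lemma connected_induce_insert_biUnion :
    (G.induce (↑(insert v (s.biUnion F)) : Set V)).Connected := by
  refine induce_connected_of_patches v (by simp) fun {x} hx => ?_
  rcases mem_insert.mp hx with rfl | hx
  · exact ⟨{x}, by simp, rfl, rfl, .rfl⟩
  obtain ⟨w, hw, hxw⟩ := mem_biUnion.mp hx
  obtain ⟨hwF, hconn⟩ := (hF w hw).connected_of_nonempty ⟨x, hxw⟩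
  have hsub : {v} ∪ (F w : Set V) ⊆ ↑(insert v (s.biUnion F)) :=
    Set.union_subset (by simp) fun y hy => mem_insert_of_mem (mem_biUnion.mpr ⟨w, hw, hy⟩)
  have hv : (G.induce ({v} : Set V)).Preconnected := by
    rw [induce_singleton_eq_top]
    exact preconnected_top
  exact ⟨_, hsub, Or.inl rfl, Or.inr hxw, (connected_induce_union hv hconn.preconnected rfl hwF
    (mem_children.mp (hs hw)).1).preconnected _ _⟩

lemma exists_adj_notMem_insert_biUnion (hG : G.IsTree) {x : V} (hx : x ∈ s.biUnion F) :
    ∃ y, G.Adj x y ∧ IsDescendant G r x y ∧ y ∉ insert v (s.biUnion F) := by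
  obtain ⟨w, hw, hxw⟩ := mem_biUnion.mp hx
  obtain ⟨y, hxy, hdesc, hyF⟩ := (hF w hw).exists_adj_notMem x hxw
  have hwy := ((hF w hw).isDescendant x hxw).trans hG.connected hdesc
  refine ⟨y, hxy, hdesc, ?_⟩
  simp only [mem_insert, mem_biUnion, not_or, not_exists, not_and]
  refine ⟨fun hyv => ?_, fun w' hw' hyw' => ?_⟩
  · subst hyv
    have := hwy.dist_le
    have := (mem_children.mp (hs hw)).2
    omega
  · obtain rfl := eq_of_isDescendant_of_mem_children hG (hs hw') (hs hw)
      ((hF w' hw').isDescendant y hyw') hwy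
    exact hyF hyw'

end Graft

lemma exists_isCoreBelow (hG : G.IsTree) (v : V) :
    ∃ X, #X = mu G r v ∧ IsCoreBelow G r v X := by
  induction hk : Fintype.card V - G.dist r v using Nat.strong_induction_on generalizing v with
  | _ k ih =>
  rcases (children G r v).eq_empty_or_nonempty with h | h
  · exact ⟨∅, by simp [mu_eq_zero h], ⟨by simp, by simp, by simp⟩⟩
  obtain ⟨w₀, hw₀, -, hmu⟩ := exists_mu_eq_one_add_sum_erase h
  have hlt : ∀ w ∈ children G r v, Fintype.card V - G.dist r w < k := fun w hw => by
    have := (mem_children.mp hw).2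
    have := dist_lt_card_of_mem_children hw
    omega
  choose! F hFcard hF using fun w hw => ih _ (hlt w hw) w rfl
  have hs : (children G r v).erase w₀ ⊆ children G r v := erase_subset _ _
  have hF' : ∀ w ∈ (children G r v).erase w₀, IsCoreBelow G r w (F w) :=
    fun w hw => hF w (hs hw)
  refine ⟨insert v (((children G r v).erase w₀).biUnion F), ?_, ?_⟩
  · rw [card_insert_biUnion hs hF' hG, hmu, sum_congr rfl fun w hw => hFcard w (hs hw)]
  refine ⟨fun x => isDescendant_of_mem_insert_biUnion hs hF' hG.connected,
    fun _ => ⟨mem_insert_self _ _, connected_induce_insert_biUnion hs hF'⟩, fun x hx => ?_⟩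
  rcases mem_insert.mp hx with rfl | hx
  · exact ⟨w₀, (mem_children.mp hw₀).1, isDescendant_of_mem_children hw₀,
      notMem_insert_biUnion hF' (mem_children.mp hw₀).1.ne'
        fun w hw => not_isDescendant_of_mem_erase hG hw₀ hw⟩
  · exact exists_adj_notMem_insert_biUnion hs hF' hG hx

variable (G r) in
/-- The number of stars centred at `v` that contain the edge `vu`. -/
def weight (c : ℕ) (v u : V) : ℕ :=
  if G.dist r u = G.dist r v + 1 then c - mu G r u else mu G r v

lemma sum_weight_children (c : ℕ) (v : V) :
    ∑ u ∈ children G r v, weight G r c u v = ∑ u ∈ children G r v, mu G r u :=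
  sum_congr rfl fun u hu => by
    have := (mem_children.mp hu).2
    rw [weight, if_neg (by omega)]

lemma sup_weight_children_le (c : ℕ) {v w₀ : V}
    (hmin : ∀ w ∈ children G r v, mu G r w₀ ≤ mu G r w) :
    (children G r v).sup (weight G r c v) ≤ c - mu G r w₀ :=
  Finset.sup_le fun u hu => by
    rw [weight, if_pos (mem_children.mp hu).2]
    exact Nat.sub_le_sub_left (hmin u hu) c

section CoreBound

variable {c : ℕ} (hG : G.IsTree) (hcore : ∀ X : Finset V, IsTreeCore G X → #X ≤ c)
include hG hcore

lemma one_add_sum_mu_le {v y : V} {s : Finset V} (hs : s ⊆ children G r v) (hy : G.Adj v y)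
    (hys : ∀ w ∈ s, ¬ IsDescendant G r w y) : 1 + ∑ w ∈ s, mu G r w ≤ c := by
  choose F hFcard hF using fun w => exists_isCoreBelow (r := r) hG w
  rw [← sum_congr rfl fun w _ => hFcard w, ← card_insert_biUnion hs (fun w _ => hF w) hG]
  refine hcore _ ⟨connected_induce_insert_biUnion hs fun w _ => hF w, fun x hx => ?_⟩
  rcases mem_insert.mp hx with rfl | hx
  · exact ⟨y, notMem_insert_biUnion (fun w _ => hF w) hy.ne' hys, hy⟩
  · obtain ⟨z, hxz, -, hz⟩ := exists_adj_notMem_insert_biUnion hs (fun w _ => hF w) hG hx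
    exact ⟨z, hz, hxz⟩

lemma mu_le (v : V) : mu G r v ≤ c := by
  rcases (children G r v).eq_empty_or_nonempty with h | h
  · simp [mu_eq_zero h]
  obtain ⟨w₀, hw₀, -, hmu⟩ := exists_mu_eq_one_add_sum_erase h
  exact hmu ▸ one_add_sum_mu_le hG hcore (erase_subset _ _) (mem_children.mp hw₀).1
    fun w hw => not_isDescendant_of_mem_erase hG hw₀ hw

lemma one_add_sum_children_mu_le {v : V} (hv : v ≠ r) :
    1 + ∑ w ∈ children G r v, mu G r w ≤ c := by
  obtain ⟨p, hp, hdp⟩ := exists_parent hG hv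
  refine one_add_sum_mu_le hG hcore subset_rfl hp fun w hw h => ?_
  have := h.dist_le
  have := (mem_children.mp hw).2
  omega

lemma weight_add_weight {u v : V} (h : G.Adj u v) : weight G r c u v + weight G r c v u = c := by
  rcases hG.dist_eq_dist_add_one_of_adj r h with hd | hd
  · rw [weight, weight, if_neg (by omega), if_pos hd]
    have := mu_le (r := r) hG hcore u
    omega
  · rw [weight, weight, if_pos hd, if_neg (by omega)]
    have := mu_le (r := r) hG hcore v
    omega

lemma coverage_root_le (hV : 2 ≤ Fintype.card V) :
    (G.neighborFinset r).sup (weight G r c r) + ∑ u ∈ G.neighborFinset r, weight G r c u r ≤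
      2 * c - 1 := by
  have : Nontrivial V := Fintype.one_lt_card_iff_nontrivial.mp hV
  obtain ⟨u, hu⟩ := hG.connected.preconnected.exists_adj_of_nontrivial r
  rw [neighborFinset_root_eq_children hG]
  have h : (children G r r).Nonempty :=
    ⟨u, by rw [← neighborFinset_root_eq_children hG, mem_neighborFinset]; exact hu⟩
  obtain ⟨w₀, hw₀, hmin, hmu⟩ := exists_mu_eq_one_add_sum_erase h
  rw [sum_weight_children, ← add_sum_erase _ _ hw₀]
  have := sup_weight_children_le c hmin
  have := mu_le (r := r) hG hcore r
  have := mu_le (r := r) hG hcore w₀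
  omega

lemma coverage_le_of_ne_root (hc : 1 ≤ c) {v : V} (hv : v ≠ r) :
    (G.neighborFinset v).sup (weight G r c v) + ∑ u ∈ G.neighborFinset v, weight G r c u v ≤
      2 * c - 1 := by
  obtain ⟨p, hp, hdp⟩ := exists_parent hG hv
  have hpc : p ∉ children G r v := fun h => by
    have := (mem_children.mp h).2
    omega
  have hvp : weight G r c v p = mu G r v := by rw [weight, if_neg (by omega)]
  have hpv : weight G r c p v = c - mu G r v := by rw [weight, if_pos (by omega)]
  rw [neighborFinset_eq_insert_children hG hp hdp, sup_insert, sum_insert hpc,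
    sum_weight_children, hvp, hpv]
  have := one_add_sum_children_mu_le hG hcore hv
  have := mu_le (r := r) hG hcore v
  rcases (children G r v).eq_empty_or_nonempty with h | h
  · simp [h, mu_eq_zero h]
    omega
  obtain ⟨w₀, hw₀, hmin, hmu⟩ := exists_mu_eq_one_add_sum_erase h
  have := sup_weight_children_le c hmin
  rw [← add_sum_erase _ _ hw₀] at *
  omega

end CoreBound

end RootedTree
end StarPacking

open StarPacking

/-- in a tree with at least 2 vertices in which every core has
size at most `c`, there is an (integer) star packing covering every edge
exactly `c` times and every vertex at most `2c - 1` times. -/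
theorem exists_star_packing {V : Type*} [Fintype V] (G : SimpleGraph V)
    (hG : G.IsTree) (hV : 2 ≤ Fintype.card V) (c : ℕ) (hc : 1 ≤ c)
    (hcore : ∀ X : Finset V, IsTreeCore G X → X.card ≤ c) :
    ∃ (n : ℕ) (st : Fin n → GraphStar G) (m : Fin n → ℕ),
      (∀ i, 0 < m i) ∧
      (∀ u v, G.Adj u v → ∑ i, (if (st i).memE u v then m i else 0) = c) ∧
      (∀ x : V, ∑ i, (if (st i).memV x then m i else 0) ≤ 2 * c - 1) := by
  obtain ⟨r⟩ := hG.connected.nonempty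
  obtain ⟨n, st, hedge, hvert⟩ := exists_star_family_of_weights G (weight G r c)
  refine ⟨n, st, fun _ => 1, fun _ => one_pos,
    fun u v h => (hedge u v h).trans (weight_add_weight hG hcore h), fun x => ?_⟩
  rw [hvert x]
  by_cases hx : x = r
  · exact hx ▸ coverage_root_le hG hcore hV
  · exact coverage_le_of_ne_root hG hcore hc hx
end

section
/- Let G be a finite tree with at least 2 vertices and let c be the maximum size of a core of G. Then the star cover rate s(G) satisfies s(G) ≤ 2 − 1/c. -/
open scoped Classical

/-- The star cover rate of `G`: the infimum, over all fractional star packings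
(positively weighted finite collections of stars) in which every edge gets
total weight at least 1, of the maximum total vertex weight. -/
noncomputable def starCoverRate {V : Type*} [Fintype V] (G : SimpleGraph V) : ℝ :=
  sInf { r : ℝ |
    ∃ (n : ℕ) (st : Fin n → GraphStar G) (w : Fin n → ℝ),
      (∀ i, 0 < w i) ∧
      (∀ u v, G.Adj u v → 1 ≤ ∑ i, (if (st i).memE u v then w i else 0)) ∧
      (∀ x : V, ∑ i, (if (st i).memV x then w i else 0) ≤ r) }

/-!
Root the tree at `r` and let `ψ v` be the largest size of a set that contains `v` and is a core
of the subtree below `v` (or `0` if there is none). Gluing `v` to optimal such sets below all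
children of `v` but `y` shows `1 + ∑ ψ (children of v) ≤ ψ v + ψ y`; gluing below all children,
with the parent as the outside neighbour of `v`, gives a core, so `1 + ∑ ψ (children of v) ≤ c`
for `v ≠ r`. Give the edge from `x` to its child `y` the share `1 - ψ y / c` at `x` and
`ψ y / c` at `y`. Nesting the stars centred at `x` by threshold (a layer-cake decomposition of
its shares) costs `x` only its largest share, plus the shares of its neighbours towards it as a
leaf, and the two inequalities bound this by `2 - 1/c`.
-/

theorem Finset.exists_layer_cake {α : Type*} (N : Finset α) (f : α → ℝ)
    (hf : ∀ u ∈ N, 0 ≤ f u) (M : ℝ) (hM : 0 ≤ M) (hfM : ∀ u ∈ N, f u ≤ M) :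
    ∃ (k : ℕ) (L : Fin k → Finset α) (w : Fin k → ℝ), (∀ i, 0 < w i) ∧
      (∀ i, (L i).Nonempty ∧ L i ⊆ N) ∧
      (∀ u ∈ N, ∑ i, (if u ∈ L i then w i else 0) = f u) ∧ ∑ i, w i ≤ M := by
  induction hn : (N.filter (0 < f ·)).card using Nat.strong_induction_on generalizing f M with
  | _ n ih =>
  set S := N.filter (0 < f ·)
  have hS₀ : ∀ u ∈ N, u ∉ S → f u = 0 := fun u hu huS =>
    le_antisymm (not_lt.1 fun h => huS (Finset.mem_filter.2 ⟨hu, h⟩)) (hf u hu)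
  rcases S.eq_empty_or_nonempty with hS | hS
  · refine ⟨0, Fin.elim0, Fin.elim0, (·.elim0), (·.elim0), fun u hu => ?_, by simpa⟩
    simp [hS₀ u hu (hS ▸ Finset.notMem_empty u)]
  -- peel off the lowest layer: the support `S` of `f`, weighted by the least positive value
  obtain ⟨u₀, hu₀, hmin⟩ := S.exists_min_image f hS
  obtain ⟨hu₀N, hm⟩ := Finset.mem_filter.1 hu₀
  have hmM := hfM u₀ hu₀N
  set f' := fun u => f u - if u ∈ S then f u₀ else 0
  have hf' : ∀ u ∈ N, 0 ≤ f' u ∧ f' u ≤ M - f u₀ := fun u hu => by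
    by_cases huS : u ∈ S
    · simp only [f', if_pos huS]; constructor <;> linarith [hmin u huS, hfM u hu]
    · simp only [f', if_neg huS, hS₀ u hu huS]; constructor <;> linarith
  have hsupp : N.filter (0 < f' ·) ⊆ S.erase u₀ := fun u hu => by
    obtain ⟨huN, hpos⟩ := Finset.mem_filter.1 hu
    by_cases huS : u ∈ S
    · refine Finset.mem_erase.2 ⟨?_, huS⟩
      rintro rfl
      simp [f', huS] at hpos
    · simp [f', huS, hS₀ u huN huS] at hpos
  have hlt : (N.filter (0 < f' ·)).card < n :=
    hn ▸ (Finset.card_le_card hsupp).trans_lt (Finset.card_erase_lt_of_mem hu₀)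
  obtain ⟨k, L, w, hw, hL, hcov, hsum⟩ :=
    ih _ hlt f' (fun u hu => (hf' u hu).1) (M - f u₀) (by linarith) (fun u hu => (hf' u hu).2) rfl
  refine ⟨k + 1, Fin.cons S L, Fin.cons (f u₀) w, Fin.cases hm hw,
    Fin.cases ⟨hS, Finset.filter_subset _ _⟩ hL, fun u hu => ?_, ?_⟩
  · rw [Fin.sum_univ_succ]
    simp only [Fin.cons_zero, Fin.cons_succ, hcov u hu, f']
    split_ifs <;> ring
  · rw [Fin.sum_univ_succ]
    simp only [Fin.cons_zero, Fin.cons_succ]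
    linarith

section StarPacking

variable {V : Type*} [Fintype V] {G : SimpleGraph V}

theorem starCoverRate_le_of_packing {ι : Type*} [Fintype ι] (st : ι → GraphStar G) (w : ι → ℝ)
    (hw : ∀ i, 0 < w i) (hcover : ∀ u v, G.Adj u v → 1 ≤ ∑ i, if (st i).memE u v then w i else 0)
    {r : ℝ} (hr : 0 ≤ r) (hload : ∀ x, ∑ i, (if (st i).memV x then w i else 0) ≤ r) :
    starCoverRate G ≤ r := by
  set e := Fintype.equivFin ι
  refine (em (BddBelow _)).elim (fun hbdd => csInf_le hbdd ?_)
    fun hbdd => (Real.sInf_of_not_bddBelow hbdd).trans_le hr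
  refine ⟨_, st ∘ e.symm, w ∘ e.symm, fun i => hw _, fun u v huv => ?_, fun x => ?_⟩
  · simpa only [Function.comp_apply, Equiv.sum_comp e.symm
      (fun i => if (st i).memE u v then w i else 0)] using hcover u v huv
  · simpa only [Function.comp_apply, Equiv.sum_comp e.symm
      (fun i => if (st i).memV x then w i else 0)] using hload x

theorem starCoverRate_le_of_layers {k : V → ℕ} (L : ∀ x, Fin (k x) → Finset V)
    (w : ∀ x, Fin (k x) → ℝ) (hw : ∀ x i, 0 < w x i) (hL : ∀ x i, (L x i).Nonempty)
    (hLadj : ∀ x i, ∀ y ∈ L x i, G.Adj x y) {r : ℝ} (hr : 0 ≤ r)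
    (hcover : ∀ u v, G.Adj u v →
      1 ≤ ∑ i, (if v ∈ L u i then w u i else 0) + ∑ i, (if u ∈ L v i then w v i else 0))
    (hload : ∀ y, ∑ i, w y i + ∑ x, ∑ i, (if y ∈ L x i then w x i else 0) ≤ r) :
    starCoverRate G ≤ r := by
  let st : (Σ x, Fin (k x)) → GraphStar G := fun p => ⟨p.1, L p.1 p.2, hL _ _, hLadj _ _⟩
  refine starCoverRate_le_of_packing st (fun p => w p.1 p.2) (fun p => hw _ _) ?_ hr ?_
  · intro u v huv
    have hsplit : ∀ x i, (if (st ⟨x, i⟩).memE u v then w x i else 0) =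
        (if u = x then (if v ∈ L x i then w x i else 0) else 0) +
          (if v = x then (if u ∈ L x i then w x i else 0) else 0) := by
      intro x i
      have := huv.ne
      simp only [GraphStar.memE, st]
      by_cases hu : u = x <;> by_cases hv : v = x <;> simp_all
    simpa only [Fintype.sum_sigma, hsplit, Finset.sum_add_distrib, Finset.sum_ite_irrel,
      Finset.sum_const_zero, Finset.sum_ite_eq, Finset.mem_univ, if_true] using hcover u v huv
  · intro y
    have hsplit : ∀ x i, (if (st ⟨x, i⟩).memV y then w x i else 0) ≤
        (if y = x then w x i else 0) + (if y ∈ L x i then w x i else 0) := by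
      intro x i
      have := (hw x i).le
      split_ifs <;> simp_all [GraphStar.memV, st]
    calc ∑ p, (if (st p).memV y then w p.1 p.2 else 0)
        ≤ ∑ x, ∑ i, ((if y = x then w x i else 0) + (if y ∈ L x i then w x i else 0)) := by
          rw [Fintype.sum_sigma]
          exact Finset.sum_le_sum fun x _ => Finset.sum_le_sum fun i _ => hsplit x i
      _ = ∑ i, w y i + ∑ x, ∑ i, (if y ∈ L x i then w x i else 0) := by
          simp only [Finset.sum_add_distrib, Finset.sum_ite_irrel, Finset.sum_const_zero,
            Finset.sum_ite_eq, Finset.mem_univ, if_true]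
      _ ≤ r := hload y

theorem starCoverRate_le_of_split (F : V → V → ℝ) {r : ℝ} (hr : 0 ≤ r)
    (hF : ∀ x y, G.Adj x y → 0 ≤ F x y) (hcover : ∀ x y, G.Adj x y → 1 ≤ F x y + F y x)
    (hload : ∀ x y, G.Adj x y → F x y + ∑ v ∈ G.neighborFinset x, F v x ≤ r) :
    starCoverRate G ≤ r := by
  have hlayers : ∀ x, ∃ (k : ℕ) (L : Fin k → Finset V) (w : Fin k → ℝ), (∀ i, 0 < w i) ∧
      (∀ i, (L i).Nonempty ∧ L i ⊆ G.neighborFinset x) ∧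
      (∀ y ∈ G.neighborFinset x, ∑ i, (if y ∈ L i then w i else 0) = F x y) ∧
      ∑ i, w i ≤ r - ∑ v ∈ G.neighborFinset x, F v x := by
    intro x
    refine (G.neighborFinset x).exists_layer_cake (F x)
      (fun y hy => hF x y ((G.mem_neighborFinset x y).1 hy)) _ ?_
      (fun y hy => by linarith [hload x y ((G.mem_neighborFinset x y).1 hy)])
    rcases (G.neighborFinset x).eq_empty_or_nonempty with hN | ⟨y, hy⟩
    · simpa [hN] using hr
    · have hxy := (G.mem_neighborFinset x y).1 hy
      linarith [hload x y hxy, hF x y hxy]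
  choose k L w hw hL hcov hsum using hlayers
  have hleaf : ∀ x y, ∑ i, (if y ∈ L x i then w x i else 0) =
      if x ∈ G.neighborFinset y then F x y else 0 := by
    intro x y
    split_ifs with hxy
    · exact hcov x y (by simpa [SimpleGraph.mem_neighborFinset, G.adj_comm] using hxy)
    · refine Finset.sum_eq_zero fun i _ => if_neg fun hy => hxy ?_
      simpa [SimpleGraph.mem_neighborFinset, G.adj_comm] using (hL x i).2 hy
  refine starCoverRate_le_of_layers L w hw (fun x i => (hL x i).1)
    (fun x i y hy => (G.mem_neighborFinset x y).1 ((hL x i).2 hy)) hr (fun u v huv => ?_)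
    (fun y => ?_)
  · simpa [hleaf, huv, huv.symm] using hcover u v huv
  · simp only [hleaf, Finset.sum_ite_mem, Finset.univ_inter]
    linarith [hsum y]

end StarPacking

namespace SimpleGraph

variable {V : Type*} {G : SimpleGraph V}

theorem connected_induce_insert_biUnion {v : V} {S : Finset V} {Y : V → Finset V}
    (hS : ∀ u ∈ S, G.Adj v u)
    (hY : ∀ u ∈ S, Y u = ∅ ∨ u ∈ Y u ∧ (G.induce (Y u : Set V)).Connected) :
    (G.induce ((insert v (S.biUnion Y) : Finset V) : Set V)).Connected := by
  refine G.induce_connected_of_patches v (by simp) fun {x} hx => ?_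
  rw [Finset.coe_insert, Set.mem_insert_iff, Finset.mem_coe, Finset.mem_biUnion] at hx
  rcases hx with rfl | ⟨u, hu, hxu⟩
  · exact ⟨{x}, by simp, rfl, rfl, .rfl⟩
  obtain ⟨huY, hconn⟩ := (hY u hu).resolve_left (Finset.ne_empty_of_mem hxu)
  have hpatch : (G.induce ({v} ∪ (Y u : Set V))).Connected :=
    connected_induce_union Preconnected.of_subsingleton hconn.preconnected rfl huY (hS u hu)
  refine ⟨{v} ∪ Y u, ?_, .inl rfl, .inr hxu, hpatch.preconnected _ _⟩
  intro y hy
  rcases hy with rfl | hy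
  · simp
  · simpa using .inr ⟨u, hu, hy⟩

section RootedTree

variable {r u v w : V}

variable (G) in
/-- `w` lies in the subtree rooted at `u` when the whole graph is rooted at `r`. -/
def IsBelow (r u w : V) : Prop :=
  G.dist r w = G.dist r u + G.dist u w

theorem isBelow_refl (r u : V) : G.IsBelow r u u := by
  simp [IsBelow]

theorem IsBelow.dist_le (h : G.IsBelow r u w) : G.dist r u ≤ G.dist r w := by
  rw [h]; omega

theorem IsTree.isBelow_trans (hG : G.IsTree) (h₁ : G.IsBelow r u v) (h₂ : G.IsBelow r v w) :
    G.IsBelow r u w := by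
  have t₁ : G.dist r w ≤ G.dist r u + G.dist u w := hG.connected.dist_triangle
  have t₂ : G.dist u w ≤ G.dist u v + G.dist v w := hG.connected.dist_triangle
  unfold IsBelow at *
  omega

theorem IsTree.eq_of_isBelow_of_dist_eq (hG : G.IsTree) {a b : V} (ha : G.IsBelow r a w)
    (hb : G.IsBelow r b w) (hab : G.dist r a = G.dist r b) : a = b := by
  have geodesic : ∀ c, G.IsBelow r c w →
      ∃ P : G.Walk r w, P.IsPath ∧ P.getVert (G.dist r c) = c := by
    intro c hc
    obtain ⟨p, hp⟩ := hG.connected.exists_walk_length_eq_dist r c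
    obtain ⟨q, hq⟩ := hG.connected.exists_walk_length_eq_dist c w
    refine ⟨p.append q, (p.append q).isPath_of_length_eq_dist ?_, ?_⟩
    · rw [Walk.length_append, hp, hq, hc]
    · rw [Walk.getVert_append', if_pos hp.ge, ← hp, Walk.getVert_length]
  obtain ⟨P, hP, hPa⟩ := geodesic a ha
  obtain ⟨Q, hQ, hQb⟩ := geodesic b hb
  have hPQ : P = Q :=
    congrArg Subtype.val ((hG.isAcyclic.subsingleton_path r w).elim ⟨P, hP⟩ ⟨Q, hQ⟩)
  rw [← hPa, ← hQb, hPQ, hab]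

theorem IsTree.exists_parent (hG : G.IsTree) (hv : v ≠ r) :
    ∃ p, G.Adj v p ∧ G.dist r v = G.dist r p + 1 := by
  obtain ⟨q, hq⟩ := hG.connected.exists_walk_length_eq_dist v r
  obtain ⟨p, hvp, q', rfl⟩ := q.exists_eq_cons_of_ne hv
  refine ⟨p, hvp, (hG.dist_eq_dist_add_one_of_adj r hvp).resolve_right fun hd => ?_⟩
  have := dist_le q'
  rw [Walk.length_cons] at hq
  rw [G.dist_comm (u := p), G.dist_comm (u := v)] at *
  omega

variable [Fintype V]

variable (G) in
noncomputable def children (r v : V) : Finset V :=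
  (G.neighborFinset v).filter fun u => G.dist r u = G.dist r v + 1

theorem mem_children : u ∈ G.children r v ↔ G.Adj v u ∧ G.dist r u = G.dist r v + 1 := by
  simp [children]

theorem isBelow_of_mem_children (h : u ∈ G.children r v) : G.IsBelow r v u := by
  obtain ⟨hvu, hd⟩ := mem_children.1 h
  rw [IsBelow, dist_eq_one_iff_adj.2 hvu, hd]

theorem IsTree.eq_of_mem_children_of_isBelow (hG : G.IsTree) {u₁ u₂ : V}
    (h₁ : u₁ ∈ G.children r v) (h₂ : u₂ ∈ G.children r v) (hw₁ : G.IsBelow r u₁ w)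
    (hw₂ : G.IsBelow r u₂ w) : u₁ = u₂ :=
  hG.eq_of_isBelow_of_dist_eq hw₁ hw₂ <| by rw [(mem_children.1 h₁).2, (mem_children.1 h₂).2]

theorem IsTree.mem_children_or_mem_children (hG : G.IsTree) (h : G.Adj u v) :
    v ∈ G.children r u ∨ u ∈ G.children r v := by
  rcases hG.dist_eq_dist_add_one_of_adj r h with hd | hd
  · exact .inr (mem_children.2 ⟨h.symm, hd⟩)
  · exact .inl (mem_children.2 ⟨h, hd⟩)

theorem IsTree.neighborFinset_root (hG : G.IsTree) : G.neighborFinset r = G.children r r := by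
  ext u
  rw [mem_neighborFinset, mem_children, dist_self]
  refine ⟨fun h => ⟨h, ?_⟩, And.left⟩
  rcases hG.dist_eq_dist_add_one_of_adj r h with hd | hd
  · rw [dist_self] at hd; omega
  · simpa using hd

theorem IsTree.neighborFinset_eq_insert_children (hG : G.IsTree) {p : V} (hvp : G.Adj v p)
    (hp : G.dist r v = G.dist r p + 1) : G.neighborFinset v = insert p (G.children r v) := by
  ext u
  rw [mem_neighborFinset, Finset.mem_insert, mem_children]
  refine ⟨fun h => ?_, fun h => h.elim (· ▸ hvp) And.left⟩
  rcases hG.dist_eq_dist_add_one_of_adj r h with hd | hd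
  · refine .inl (hG.eq_of_isBelow_of_dist_eq (r := r) (w := v) ?_ ?_ (by omega))
    · rw [IsBelow, dist_eq_one_iff_adj.2 h.symm, hd]
    · rw [IsBelow, dist_eq_one_iff_adj.2 hvp.symm, hp]
  · exact .inr ⟨h, hd⟩

end RootedTree

section PendantCore

variable {r v : V}

variable (G) in
/-- `Y` is empty, or a core of the subtree rooted at `v` that contains `v`, with the outside
neighbours taken inside that subtree. -/
def IsPendantCore (r v : V) (Y : Finset V) : Prop :=
  (∀ x ∈ Y, G.IsBelow r v x) ∧ (Y = ∅ ∨ v ∈ Y ∧ (G.induce (Y : Set V)).Connected) ∧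
    ∀ x ∈ Y, ∃ y, G.IsBelow r v y ∧ y ∉ Y ∧ G.Adj x y

theorem isPendantCore_empty (r v : V) : G.IsPendantCore r v ∅ := by
  simp [IsPendantCore]

theorem IsPendantCore.isTreeCore {Y : Finset V} (hY : G.IsPendantCore r v Y) (hne : Y.Nonempty) :
    IsTreeCore G Y :=
  ⟨(hY.2.1.resolve_left hne.ne_empty).2, fun x hx =>
    let ⟨y, _, hyY, hxy⟩ := hY.2.2 x hx
    ⟨y, hyY, hxy⟩⟩

variable [Fintype V]

variable (G) in
noncomputable def pendantCoreNumber (r v : V) : ℕ :=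
  ((Finset.univ : Finset (Finset V)).filter (G.IsPendantCore r v)).sup Finset.card

theorem IsPendantCore.card_le {Y : Finset V} (hY : G.IsPendantCore r v Y) :
    Y.card ≤ G.pendantCoreNumber r v :=
  Finset.le_sup (f := Finset.card) (Finset.mem_filter.2 ⟨Finset.mem_univ _, hY⟩)

theorem exists_isPendantCore_card_eq (r v : V) :
    ∃ Y, G.IsPendantCore r v Y ∧ Y.card = G.pendantCoreNumber r v := by
  obtain ⟨Y, hY, hcard⟩ := Finset.exists_mem_eq_sup _
    ⟨∅, Finset.mem_filter.2 ⟨Finset.mem_univ _, isPendantCore_empty r v⟩⟩ Finset.card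
  exact ⟨Y, (Finset.mem_filter.1 hY).2, hcard.symm⟩

theorem pendantCoreNumber_le {c : ℕ} (hc : ∀ X, IsTreeCore G X → X.card ≤ c) (r v : V) :
    G.pendantCoreNumber r v ≤ c := by
  obtain ⟨Y, hY, hcard⟩ := exists_isPendantCore_card_eq (G := G) r v
  rw [← hcard]
  rcases Y.eq_empty_or_nonempty with rfl | hne
  · exact Nat.zero_le c
  · exact hc Y (hY.isTreeCore hne)

section Gluing

variable (hG : G.IsTree) {S : Finset V} (hS : S ⊆ G.children r v) {Y : V → Finset V}
  (hY : ∀ u ∈ S, G.IsPendantCore r u (Y u))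
include hG hS hY

theorem IsTree.eq_of_mem_pendantCore {u u' y : V} (hu : u ∈ G.children r v) (hu' : u' ∈ S)
    (hyu' : y ∈ Y u') (hyu : G.IsBelow r u y) : u' = u :=
  hG.eq_of_mem_children_of_isBelow (hS hu') hu ((hY u' hu').1 y hyu') hyu

theorem IsTree.isBelow_of_mem_insert_biUnion {x : V} (hx : x ∈ insert v (S.biUnion Y)) :
    G.IsBelow r v x := by
  rcases Finset.mem_insert.1 hx with rfl | hx
  · exact isBelow_refl r x
  obtain ⟨u, hu, hxu⟩ := Finset.mem_biUnion.1 hx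
  exact hG.isBelow_trans (isBelow_of_mem_children (hS hu)) ((hY u hu).1 x hxu)

theorem IsTree.exists_adj_notMem_insert_biUnion {x : V} (hx : x ∈ S.biUnion Y) :
    ∃ y, G.IsBelow r v y ∧ y ∉ insert v (S.biUnion Y) ∧ G.Adj x y := by
  obtain ⟨u, hu, hxu⟩ := Finset.mem_biUnion.1 hx
  obtain ⟨y, hyu, hyY, hxy⟩ := (hY u hu).2.2 x hxu
  refine ⟨y, hG.isBelow_trans (isBelow_of_mem_children (hS hu)) hyu, fun hy => ?_, hxy⟩
  rcases Finset.mem_insert.1 hy with rfl | hy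
  · have := hyu.dist_le
    have := (mem_children.1 (hS hu)).2
    omega
  obtain ⟨u', hu', hyu'⟩ := Finset.mem_biUnion.1 hy
  obtain rfl := hG.eq_of_mem_pendantCore hS hY (hS hu) hu' hyu' hyu
  exact hyY hyu'

theorem IsTree.card_insert_biUnion :
    (insert v (S.biUnion Y)).card = 1 + ∑ u ∈ S, (Y u).card := by
  have hv : v ∉ S.biUnion Y := fun hv => by
    obtain ⟨u, hu, hvu⟩ := Finset.mem_biUnion.1 hv
    have := ((hY u hu).1 v hvu).dist_le
    have := (mem_children.1 (hS hu)).2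
    omega
  have hdisj : (S : Set V).PairwiseDisjoint Y := fun u hu u' hu' hne =>
    Finset.disjoint_left.2 fun x hxu hxu' =>
      hne (hG.eq_of_mem_pendantCore hS hY (hS hu') hu hxu ((hY u' hu').1 x hxu'))
  rw [Finset.card_insert_of_notMem hv, Finset.card_biUnion hdisj, add_comm]

end Gluing

section Bounds

variable (hG : G.IsTree)
include hG

local notation "ψ" => G.pendantCoreNumber r

theorem IsTree.one_add_sum_pendantCoreNumber_le {c : ℕ} (hc : ∀ X, IsTreeCore G X → X.card ≤ c)
    (hv : v ≠ r) : 1 + ∑ u ∈ G.children r v, ψ u ≤ c := by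
  obtain ⟨p, hvp, hp⟩ := hG.exists_parent hv
  choose Y hY hYcard using fun u => exists_isPendantCore_card_eq (G := G) r u
  have hS := Finset.Subset.refl (G.children r v)
  have hcore : IsTreeCore G (insert v ((G.children r v).biUnion Y)) := by
    refine ⟨connected_induce_insert_biUnion
      (fun u hu => (mem_children.1 (hS hu)).1) fun u _ => (hY u).2.1, fun x hx => ?_⟩
    rcases Finset.mem_insert.1 hx with rfl | hx
    · refine ⟨p, fun hpX => ?_, hvp⟩
      have := (hG.isBelow_of_mem_insert_biUnion hS (fun u _ => hY u) hpX).dist_le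
      omega
    · obtain ⟨y, -, hyX, hxy⟩ := hG.exists_adj_notMem_insert_biUnion hS (fun u _ => hY u) hx
      exact ⟨y, hyX, hxy⟩
  simpa [hG.card_insert_biUnion hS fun u _ => hY u, hYcard] using hc _ hcore

theorem IsTree.one_add_sum_pendantCoreNumber_le_add {y : V} (hy : y ∈ G.children r v) :
    1 + ∑ u ∈ G.children r v, ψ u ≤ ψ v + ψ y := by
  choose Y hY hYcard using fun u => exists_isPendantCore_card_eq (G := G) r u
  have hS := Finset.erase_subset y (G.children r v)
  have hX : G.IsPendantCore r v (insert v (((G.children r v).erase y).biUnion Y)) := by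
    refine ⟨fun x => hG.isBelow_of_mem_insert_biUnion hS (fun u _ => hY u),
      .inr ⟨Finset.mem_insert_self _ _, connected_induce_insert_biUnion
      (fun u hu => (mem_children.1 (hS hu)).1) fun u _ => (hY u).2.1⟩,
      fun x hx => ?_⟩
    rcases Finset.mem_insert.1 hx with rfl | hx
    · refine ⟨y, isBelow_of_mem_children hy, fun hyX => ?_, (mem_children.1 hy).1⟩
      rcases Finset.mem_insert.1 hyX with rfl | hyX
      · have := (mem_children.1 hy).2
        omega
      obtain ⟨u, hu, hyu⟩ := Finset.mem_biUnion.1 hyX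
      exact Finset.ne_of_mem_erase hu
        (hG.eq_of_mem_pendantCore hS (fun u _ => hY u) hy hu hyu (isBelow_refl r y))
    · exact hG.exists_adj_notMem_insert_biUnion hS (fun u _ => hY u) hx
  have hcard := hX.card_le
  rw [hG.card_insert_biUnion hS fun u _ => hY u] at hcard
  simp only [hYcard] at hcard
  rw [← Finset.sum_erase_add _ _ hy]
  omega

end Bounds

end PendantCore

section StarShare

variable [Fintype V] {r x y : V} {c : ℕ}

local notation "ψ" => G.pendantCoreNumber r

variable (G) in
/-- `c` times the weight that the stars centred at `x` put on the edge `xy`. -/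
noncomputable def starShare (c : ℕ) (r x y : V) : ℝ :=
  if y ∈ G.children r x then c - G.pendantCoreNumber r y else G.pendantCoreNumber r x

theorem starShare_nonneg (hc : ∀ X, IsTreeCore G X → X.card ≤ c) : 0 ≤ G.starShare c r x y := by
  unfold starShare
  split_ifs
  · simpa using (Nat.cast_le (α := ℝ)).2 (pendantCoreNumber_le hc r y)
  · positivity

theorem starShare_of_mem_children (hy : y ∈ G.children r x) : G.starShare c r x y = c - ψ y :=
  if_pos hy

theorem starShare_of_notMem_children (hy : y ∉ G.children r x) : G.starShare c r x y = ψ x :=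
  if_neg hy

theorem starShare_parent (hy : y ∈ G.children r x) : G.starShare c r y x = ψ y :=
  starShare_of_notMem_children fun hx => by
    have := (mem_children.1 hx).2
    have := (mem_children.1 hy).2
    omega

variable (hG : G.IsTree)
include hG

theorem IsTree.starShare_add_starShare (h : G.Adj x y) :
    G.starShare c r x y + G.starShare c r y x = c := by
  rcases hG.mem_children_or_mem_children (r := r) h with hy | hx
  · rw [starShare_parent hy, starShare_of_mem_children hy]; ring
  · rw [starShare_parent hx, starShare_of_mem_children hx]; ring

theorem IsTree.starShare_add_sum_le (hc : ∀ X, IsTreeCore G X → X.card ≤ c) (h : G.Adj x y) :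
    G.starShare c r x y + ∑ v ∈ G.neighborFinset x, G.starShare c r v x ≤ 2 * c - 1 := by
  have hchildren : ∑ v ∈ G.children r x, G.starShare c r v x = ∑ v ∈ G.children r x, (ψ v : ℝ) :=
    Finset.sum_congr rfl fun v hv => starShare_parent hv
  have hy : y ∈ G.neighborFinset x := (mem_neighborFinset G x y).2 h
  by_cases hx : x = r
  · subst x
    rw [hG.neighborFinset_root] at hy ⊢
    have hsum := hG.one_add_sum_pendantCoreNumber_le_add hy
    have hψ := pendantCoreNumber_le hc r r
    rw [hchildren, starShare_of_mem_children hy]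
    have : 1 + ∑ u ∈ G.children r r, (ψ u : ℝ) ≤ ψ r + ψ y := by exact_mod_cast hsum
    have : (ψ r : ℝ) ≤ c := by exact_mod_cast hψ
    linarith
  obtain ⟨p, hxp, hp⟩ := hG.exists_parent hx
  have hpx : p ∉ G.children r x := fun hpx => by
    have := (mem_children.1 hpx).2
    omega
  rw [hG.neighborFinset_eq_insert_children hxp hp] at hy ⊢
  rw [Finset.sum_insert hpx, hchildren,
    starShare_of_mem_children (mem_children.2 ⟨hxp.symm, hp⟩)]
  rcases Finset.mem_insert.1 hy with rfl | hy
  · have hsum := hG.one_add_sum_pendantCoreNumber_le hc hx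
    rw [starShare_of_notMem_children hpx]
    have : 1 + ∑ u ∈ G.children r x, (ψ u : ℝ) ≤ c := by exact_mod_cast hsum
    linarith
  · have hsum := hG.one_add_sum_pendantCoreNumber_le_add hy
    rw [starShare_of_mem_children hy]
    have : 1 + ∑ u ∈ G.children r x, (ψ u : ℝ) ≤ ψ x + ψ y := by exact_mod_cast hsum
    linarith

end StarShare

end SimpleGraph

theorem starCoverRate_le_general {V : Type*} [Fintype V] (G : SimpleGraph V)
    (hG : G.IsTree) (c : ℕ)
    (hc : IsGreatest {n : ℕ | ∃ X : Finset V, IsTreeCore G X ∧ X.card = n} c) :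
    starCoverRate G ≤ 2 - 1 / (c : ℝ) := by
  obtain ⟨X, hX, hXc⟩ := hc.1
  have hcore : ∀ Y, IsTreeCore G Y → Y.card ≤ c := fun Y hY => hc.2 ⟨Y, hY, rfl⟩
  obtain ⟨⟨r, hr⟩⟩ := hX.1.nonempty
  have hc1 : (1 : ℝ) ≤ c := by exact_mod_cast hXc ▸ Finset.card_pos.2 ⟨r, hr⟩
  have hc0 : (0 : ℝ) < c := by linarith
  refine starCoverRate_le_of_split (fun x y => G.starShare c r x y / c)
    (by linarith [(div_le_one hc0).2 hc1])
    (fun x y _ => div_nonneg (SimpleGraph.starShare_nonneg hcore) hc0.le)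
    (fun x y h => ?_) (fun x y h => ?_)
  · rw [← add_div, hG.starShare_add_starShare h, div_self hc0.ne']
  · rw [← Finset.sum_div, ← add_div, div_le_iff₀ hc0, sub_mul, div_mul_cancel₀ _ hc0.ne']
    linarith [hG.starShare_add_sum_le (r := r) hcore h]

/-- for a tree with at least 2 vertices whose maximum core size is
`c`, the star cover rate is at most `2 - 1/c`. -/
theorem starCoverRate_le {V : Type*} [Fintype V] (G : SimpleGraph V)
    (hG : G.IsTree) (hV : 2 ≤ Fintype.card V) (c : ℕ)
    (hc : IsGreatest {n : ℕ | ∃ X : Finset V, IsTreeCore G X ∧ X.card = n} c) :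
    starCoverRate G ≤ 2 - 1 / (c : ℝ) :=
  starCoverRate_le_general G hG c hc
end

section
/- Let G be a finite tree, let (v₁,v₂) be an edge of G with neither endpoint a leaf, and let G₁, G₂ be the two components of G minus this edge, with vᵢ ∈ Gᵢ. If C₁ is a core of G₁ containing v₁ and C₂ is a core of G₂ containing v₂, then C₁ ∪ C₂ is a core of G. -/
open scoped Classical

/-- `X` is a core of the graph `H` restricted to the vertex set `S`
(e.g. a connected component of `H`). -/
def IsCoreOn {V : Type*} (H : SimpleGraph V) (S : Set V) (X : Finset V) : Prop :=
  (X : Set V) ⊆ S ∧ (H.induce (X : Set V)).Connected ∧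
    ∀ x ∈ X, ∃ y ∈ S, y ∉ X ∧ H.Adj x y

/-! Every edge of a tree is a bridge, so the two sides of `v₁v₂` are disjoint: a vertex of
`C₁ ∪ C₂` keeps its outside neighbour from its own side, and the edge `v₁v₂` glues the two
connected induced subgraphs together. -/

namespace SimpleGraph

variable {V : Type*}

lemma disjoint_setOf_reachable {H : SimpleGraph V} {u v : V} (huv : ¬ H.Reachable u v) :
    Disjoint {w | H.Reachable u w} {w | H.Reachable v w} :=
  Set.disjoint_left.mpr fun _ hu hv => huv (hu.trans (Reachable.symm hv))

lemma IsAcyclic.not_reachable_deleteEdges {G : SimpleGraph V} (hG : G.IsAcyclic) {u v : V}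
    (huv : G.Adj u v) : ¬ (G.deleteEdges {s(u, v)}).Reachable u v :=
  isBridge_iff.mp (isAcyclic_iff_forall_isBridge.mp hG huv)

lemma Preconnected.induce_mono {H G : SimpleGraph V} (hHG : H ≤ G) {s : Set V}
    (h : (H.induce s).Preconnected) : (G.induce s).Preconnected :=
  h.mono fun _ _ hab => hHG hab

end SimpleGraph

namespace IsCoreOn

variable {V : Type*} {H : SimpleGraph V} {S T : Set V} {X Y : Finset V}

lemma exists_adj_notMem_union (hX : IsCoreOn H S X) (hY : (Y : Set V) ⊆ T)
    (hST : Disjoint S T) {x : V} (hx : x ∈ X) : ∃ y, y ∉ X ∪ Y ∧ H.Adj x y := by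
  obtain ⟨y, hyS, hyX, hxy⟩ := hX.2.2 x hx
  refine ⟨y, fun hy => ?_, hxy⟩
  rcases Finset.mem_union.mp hy with hyX' | hyY
  · exact hyX hyX'
  · exact Set.disjoint_left.mp hST hyS (hY hyY)

theorem isTreeCore_union {G : SimpleGraph V} (hHG : H ≤ G) (hX : IsCoreOn H S X)
    (hY : IsCoreOn H T Y) (hST : Disjoint S T) {x y : V} (hx : x ∈ X) (hy : y ∈ Y)
    (hxy : G.Adj x y) : IsTreeCore G (X ∪ Y) := by
  refine ⟨?_, fun z hz => ?_⟩
  · rw [Finset.coe_union]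
    exact SimpleGraph.connected_induce_union (hX.2.1.preconnected.induce_mono hHG)
      (hY.2.1.preconnected.induce_mono hHG) hx hy hxy
  · rcases Finset.mem_union.mp hz with hzX | hzY
    · obtain ⟨w, hw, hzw⟩ := hX.exists_adj_notMem_union hY.1 hST hzX
      exact ⟨w, hw, hHG hzw⟩
    · obtain ⟨w, hw, hzw⟩ := hY.exists_adj_notMem_union hX.1 hST.symm hzY
      exact ⟨w, by rwa [Finset.union_comm], hHG hzw⟩

end IsCoreOn

theorem union_cores_isCore_general {V : Type*} (G : SimpleGraph V) (hG : G.IsTree)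
    (v₁ v₂ : V) (hadj : G.Adj v₁ v₂)
    (C₁ C₂ : Finset V)
    (hC₁ : IsCoreOn (G.deleteEdges {s(v₁, v₂)})
      {u | (G.deleteEdges {s(v₁, v₂)}).Reachable v₁ u} C₁)
    (hC₂ : IsCoreOn (G.deleteEdges {s(v₁, v₂)})
      {u | (G.deleteEdges {s(v₁, v₂)}).Reachable v₂ u} C₂)
    (hv₁ : v₁ ∈ C₁) (hv₂ : v₂ ∈ C₂) :
    IsTreeCore G (C₁ ∪ C₂) :=
  hC₁.isTreeCore_union (G.deleteEdges_le _) hC₂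
    (SimpleGraph.disjoint_setOf_reachable (hG.isAcyclic.not_reachable_deleteEdges hadj))
    hv₁ hv₂ hadj

/-- if `v₁v₂` is an edge of a tree `G` with neither endpoint a
leaf, `G₁, G₂` the two components of `G` minus this edge, and `Cᵢ` a core of
`Gᵢ` containing `vᵢ`, then `C₁ ∪ C₂` is a core of `G`. -/
theorem union_cores_isCore {V : Type*} (G : SimpleGraph V) (hG : G.IsTree)
    (v₁ v₂ : V) (hadj : G.Adj v₁ v₂)
    (h₁ : ∃ u, u ≠ v₂ ∧ G.Adj v₁ u) (h₂ : ∃ u, u ≠ v₁ ∧ G.Adj v₂ u)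
    (C₁ C₂ : Finset V)
    (hC₁ : IsCoreOn (G.deleteEdges {s(v₁, v₂)})
      {u | (G.deleteEdges {s(v₁, v₂)}).Reachable v₁ u} C₁)
    (hC₂ : IsCoreOn (G.deleteEdges {s(v₁, v₂)})
      {u | (G.deleteEdges {s(v₁, v₂)}).Reachable v₂ u} C₂)
    (hv₁ : v₁ ∈ C₁) (hv₂ : v₂ ∈ C₂) :
    IsTreeCore G (C₁ ∪ C₂) :=
  union_cores_isCore_general G hG v₁ v₂ hadj C₁ C₂ hC₁ hC₂ hv₁ hv₂
end

section
/- Let G be a finite tree, c a positive integer, and w : V(G) → ℤ>0 a weight function such that every core of G has total weight at most c. Suppose w is maximal with this property, i.e., increasing w at any single vertex by 1 creates a core of weight exceeding c. Then every vertex of G lies in some core of total weight exactly c. -/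
open scoped Classical

/-! Raising `w` at `v` by one changes only the weights of the cores containing `v`, and by
exactly one. So the core that maximality produces for `v` must contain `v`, and its weight,
at most `c` but above `c - 1`, is `c`. -/

theorem Finset.sum_add_ite_eq {α M : Type*} [DecidableEq α] [AddCommMonoid M]
    (s : Finset α) (f : α → M) (a : α) (b : M) :
    ∑ x ∈ s, (f x + if x = a then b else 0) = ∑ x ∈ s, f x + if a ∈ s then b else 0 := by
  rw [Finset.sum_add_distrib, Finset.sum_ite_eq']

theorem every_vertex_in_full_weight_core_general {V : Type*}
    (G : SimpleGraph V)
    (c : ℤ) (w : V → ℤ)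
    (hbound : ∀ X : Finset V, IsTreeCore G X → ∑ x ∈ X, w x ≤ c)
    (hmax : ∀ v : V, ∃ X : Finset V, IsTreeCore G X ∧
      c < ∑ x ∈ X, (w x + if x = v then 1 else 0)) :
    ∀ v : V, ∃ X : Finset V, IsTreeCore G X ∧ v ∈ X ∧ ∑ x ∈ X, w x = c := by
  intro v
  obtain ⟨X, hX, hbumped⟩ := hmax v
  have hle := hbound X hX
  rw [Finset.sum_add_ite_eq] at hbumped
  by_cases hv : v ∈ X
  · rw [if_pos hv] at hbumped
    exact ⟨X, hX, hv, by omega⟩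
  · rw [if_neg hv] at hbumped
    omega

/-- for a maximal positive integer weight function `w` on a tree
in which every core has weight at most `c`, every vertex is contained in a core
of weight exactly `c`. -/
theorem every_vertex_in_full_weight_core {V : Type*} [Fintype V]
    (G : SimpleGraph V) (hG : G.IsTree) (hV : 2 ≤ Fintype.card V)
    (c : ℤ) (hc : 0 < c) (w : V → ℤ) (hw : ∀ v, 0 < w v)
    (hbound : ∀ X : Finset V, IsTreeCore G X → ∑ x ∈ X, w x ≤ c)
    (hmax : ∀ v : V, ∃ X : Finset V, IsTreeCore G X ∧
      c < ∑ x ∈ X, (w x + if x = v then 1 else 0)) :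
    ∀ v : V, ∃ X : Finset V, IsTreeCore G X ∧ v ∈ X ∧ ∑ x ∈ X, w x = c :=
  every_vertex_in_full_weight_core_general G c w hbound hmax
end

section
/- Let G be a finite tree and X a core of G. Let v ∈ X be a non-leaf vertex of G (considered within X's structure), and suppose deleting v from X leaves connected components C₁, …, C_s of G[X]\{v}, each containing exactly one neighbor of v in X. Then |X| = 1 + |C₁| + ⋯ + |C_s|, and each C_i is a core of the component of G − (v v_i) containing v_i, where v_i is the neighbor of v in C_i. -/
open scoped Classical

/-- if `X` is a core of a tree `G`, `v ∈ X` a non-leaf vertex,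
and `C₁, …, C_s` the connected components of `G[X] - v`, each containing a
unique neighbor `vᵢ` of `v`, then `|X| = 1 + ∑ᵢ |Cᵢ|` and each `Cᵢ` is a core
of the component of `G - (v vᵢ)` containing `vᵢ`. -/
theorem core_decomposition {V : Type*} [Fintype V] (G : SimpleGraph V)
    (hG : G.IsTree) (X : Finset V) (hX : IsTreeCore G X) (v : V) (hv : v ∈ X)
    (hnl : ∃ a b, a ≠ b ∧ G.Adj v a ∧ G.Adj v b)
    (s : ℕ) (C : Fin s → Finset V) (vtx : Fin s → V)
    (hdisj : ∀ i j, i ≠ j → Disjoint (C i) (C j))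
    (hunion : X.erase v = Finset.univ.biUnion C)
    (hconn : ∀ i, (G.induce ((C i : Finset V) : Set V)).Connected)
    (hsep : ∀ i j, i ≠ j → ∀ a ∈ C i, ∀ b ∈ C j, ¬ G.Adj a b)
    (hvtx : ∀ i, vtx i ∈ C i ∧ G.Adj v (vtx i) ∧
      ∀ u ∈ C i, G.Adj v u → u = vtx i) :
    X.card = 1 + ∑ i, (C i).card ∧
    ∀ i, IsCoreOn (G.deleteEdges {s(v, vtx i)})
      {u | (G.deleteEdges {s(v, vtx i)}).Reachable (vtx i) u} (C i) := by
  have hCsub : ∀ i, C i ⊆ X.erase v := by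
    intro i
    rw [hunion]
    exact Finset.subset_biUnion_of_mem C (Finset.mem_univ i)
  have hvC : ∀ i, v ∉ C i := fun i h => (Finset.mem_erase.mp (hCsub i h)).1 rfl
  constructor
  · rw [← Finset.card_erase_add_one hv, hunion,
      Finset.card_biUnion (fun i _ j _ hij => hdisj i j hij)]
    ring
  · intro i
    set G' := G.deleteEdges {s(v, vtx i)} with hG'def
    -- the induced graph on `C i` is unchanged by deleting the edge `v - vtx i`
    have hind : G'.induce ((C i : Finset V) : Set V) = G.induce ((C i : Finset V) : Set V) := by
      ext a b
      simp only [SimpleGraph.comap_adj, Function.Embedding.coe_subtype,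
        SimpleGraph.deleteEdges_adj, Set.mem_singleton_iff, hG'def]
      constructor
      · exact fun h => h.1
      · intro h
        refine ⟨h, fun hc => ?_⟩
        have : v = (a : V) ∨ v = (b : V) := by
          rw [Sym2.eq_iff] at hc
          rcases hc with ⟨h1, _⟩ | ⟨_, h2⟩
          · exact Or.inl h1.symm
          · exact Or.inr h2.symm
        rcases this with h1 | h1
        · exact hvC i (h1 ▸ a.2)
        · exact hvC i (h1 ▸ b.2)
    have hconn' : (G'.induce ((C i : Finset V) : Set V)).Connected := hind ▸ hconn i
    have hreach : ∀ u ∈ C i, G'.Reachable (vtx i) u := by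
      intro u hu
      have h := hconn'.preconnected ⟨vtx i, (hvtx i).1⟩ ⟨u, hu⟩
      have := h.map (SimpleGraph.Embedding.induce ((C i : Finset V) : Set V)).toHom
      simpa using this
    refine ⟨fun u hu => hreach u (by simpa using hu), hconn', ?_⟩
    intro x hx
    have hxX : x ∈ X := Finset.mem_of_mem_erase (hCsub i hx)
    obtain ⟨y, hyX, hxy⟩ := hX.2 x hxX
    have hxv : x ≠ v := fun h => hvC i (h ▸ hx)
    have hyv : y ≠ v := fun h => hyX (h ▸ hv)
    have hadj' : G'.Adj x y := by
      rw [hG'def, SimpleGraph.deleteEdges_adj]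
      refine ⟨hxy, fun hc => ?_⟩
      rw [Set.mem_singleton_iff, Sym2.eq_iff] at hc
      rcases hc with ⟨h1, _⟩ | ⟨_, h2⟩
      · exact hxv h1
      · exact hyv h2
    exact ⟨y, (hreach x hx).trans hadj'.reachable, fun h => hyX (Finset.mem_of_mem_erase (hCsub i h)), hadj'⟩
end

section
/- Let G be a graph with a secret sharing scheme on it: discrete random variables ξ (the secret, with H(ξ) > 0) and S_v for each vertex v, such that for every edge uv the secret ξ is a deterministic function of (S_u, S_v), and for every independent set A the secret ξ is independent of (S_v)_{v∈A}. Define f(A) = H((S_v)_{v∈A}) / H(ξ). Then f satisfies: f(∅)=0, f is monotone, f is submodular, f(A) ≥ f(B)+1 whenever B ⊆ A, A contains an edge and B is independent, and f(A)+f(B) ≥ f(A∪B)+f(A∩B)+1 whenever A and B each contain an edge but A∩B is independent. -/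
/-!
Every property is a linear inequality between entropies of tuples of shares, possibly
paired with the secret. Monotonicity and submodularity are Shannon inequalities:
`H(W) ≤ H(X)` when `W` is a function of `X`, and `H(X,Y,Z) + H(Z) ≤ H(X,Z) + H(Y,Z)`, which
is `log t ≤ t - 1` applied to `ρ = P(x,z) P(y,z) / (P(x,y,z) P(z))`, a ratio of expectation
at most one. For (d) and (e) these are applied with the secret adjoined to every tuple: the
shares of a qualified set determine the secret through an edge it contains, so adjoining `ξ`
costs nothing, while adjoining it to the shares of an independent set adds exactly `H(ξ)`.
-/

open scoped Classical

/-- Shannon entropy of the (discrete, finite-range) random variable `X` on the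
finite probability space `(Ω, p)`. -/
noncomputable def entr {Ω S : Type*} [Fintype Ω] [DecidableEq S]
    (p : Ω → ℝ) (X : Ω → S) : ℝ :=
  ∑ s ∈ Finset.univ.image X,
    Real.negMulLog (∑ ω ∈ Finset.univ.filter (fun ω => X ω = s), p ω)

/-- The joint random variable formed by the shares of the vertices in `A`. -/
def joint {V Ω T : Type*} (S : V → Ω → T) (A : Finset V) (ω : Ω) :
    {x // x ∈ A} → T :=
  fun a => S a.1 ω

namespace EntropyMethod

open Finset Real

lemma neg_log_add_neg_log_le_of_pos {a b c d : ℝ} (ha : 0 < a) (hb : 0 < b) (hc : 0 < c)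
    (hd : 0 < d) : -log a + -log b ≤ -log c + -log d + (c * d / (a * b) - 1) := by
  have h := log_le_sub_one_of_pos (div_pos (mul_pos hc hd) (mul_pos ha hb))
  rw [log_div (mul_pos hc hd).ne' (mul_pos ha hb).ne', log_mul hc.ne' hd.ne',
    log_mul ha.ne' hb.ne'] at h
  linarith

lemma mul_neg_log_add_le_of_pos {p a b c d : ℝ} (hp : 0 ≤ p) (ha : 0 < p → 0 < a)
    (hb : 0 < p → 0 < b) (hc : 0 < p → 0 < c) (hd : 0 < p → 0 < d) :
    p * -log a + p * -log b ≤ p * -log c + p * -log d + (p * (c * d / (a * b)) - p) := by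
  rcases hp.eq_or_lt with rfl | hp
  · simp
  · have h := neg_log_add_neg_log_le_of_pos (ha hp) (hb hp) (hc hp) (hd hp)
    have := mul_le_mul_of_nonneg_left h hp.le
    linarith

lemma mul_div_le_of_nonneg {a b : ℝ} (ha : 0 ≤ a) (hb : 0 ≤ b) : a * (b / a) ≤ b := by
  rcases ha.eq_or_lt with rfl | ha
  · simpa using hb
  · rw [mul_div_cancel₀ b ha.ne']

variable {Ω : Type*}

def Determines {α β : Type*} (X : Ω → α) (Y : Ω → β) : Prop :=
  ∀ ω ω', X ω = X ω' → Y ω = Y ω'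

section Determines

variable {α β γ : Type*} {X : Ω → α} {Y : Ω → β} {Z : Ω → γ}

lemma Determines.refl (X : Ω → α) : Determines X X := fun _ _ => id

lemma Determines.trans (hXY : Determines X Y) (hYZ : Determines Y Z) : Determines X Z :=
  fun ω ω' h => hYZ ω ω' (hXY ω ω' h)

lemma Determines.pair (hY : Determines X Y) (hZ : Determines X Z) :
    Determines X (fun ω => (Y ω, Z ω)) :=
  fun ω ω' h => Prod.ext (hY ω ω' h) (hZ ω ω' h)

lemma determines_fst (X : Ω → α) (Y : Ω → β) : Determines (fun ω => (X ω, Y ω)) X :=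
  fun _ _ h => (Prod.mk.inj h).1

lemma determines_snd (X : Ω → α) (Y : Ω → β) : Determines (fun ω => (X ω, Y ω)) Y :=
  fun _ _ h => (Prod.mk.inj h).2

lemma Determines.pairWith (h : Determines X Y) (Z : Ω → γ) :
    Determines (fun ω => (X ω, Z ω)) (fun ω => (Y ω, Z ω)) :=
  ((determines_fst X Z).trans h).pair (determines_snd X Z)

end Determines

section Joint

variable {V T : Type*} (S : V → Ω → T)

lemma determines_joint_of_subset {A B : Finset V} (h : B ⊆ A) :
    Determines (joint S A) (joint S B) :=
  fun _ _ hA => funext fun b => congrFun hA ⟨b, h b.2⟩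

lemma determines_joint_union (A B : Finset V) :
    Determines (fun ω => (joint S A ω, joint S B ω)) (joint S (A ∪ B)) :=
  fun _ _ h => funext fun v => (mem_union.1 v.2).elim
    (fun hv => congrFun (Prod.mk.inj h).1 ⟨v, hv⟩) (fun hv => congrFun (Prod.mk.inj h).2 ⟨v, hv⟩)

end Joint

variable [Fintype Ω] {p : Ω → ℝ}

noncomputable def mass {α : Type*} [DecidableEq α] (p : Ω → ℝ) (X : Ω → α) (a : α) : ℝ :=
  ∑ ω with X ω = a, p ω

section Entropy

variable {α β γ δ ε : Type*} [DecidableEq α] [DecidableEq β] [DecidableEq γ] [DecidableEq δ]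
  [DecidableEq ε]

lemma mass_nonneg (hp : ∀ ω, 0 ≤ p ω) (X : Ω → α) (a : α) : 0 ≤ mass p X a :=
  sum_nonneg fun ω _ => hp ω

lemma mass_pos (hp : ∀ ω, 0 ≤ p ω) (X : Ω → α) {ω : Ω} (hω : 0 < p ω) :
    0 < mass p X (X ω) :=
  hω.trans_le (single_le_sum (fun i _ => hp i) (by simp))

lemma mass_le_mass_of_determines (hp : ∀ ω, 0 ≤ p ω) {X : Ω → α} {Y : Ω → β}
    (h : Determines X Y) (ω : Ω) : mass p X (X ω) ≤ mass p Y (Y ω) :=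
  sum_le_sum_of_subset_of_nonneg
    (fun ω' hω' => by simp only [mem_filter, mem_univ, true_and] at hω' ⊢; exact h _ _ hω')
    (fun i _ _ => hp i)

lemma sum_mul_comp_eq_sum_mass (X : Ω → α) (f : α → ℝ) :
    ∑ ω, p ω * f (X ω) = ∑ a ∈ univ.image X, mass p X a * f a := by
  rw [← sum_fiberwise_of_maps_to (fun ω _ => mem_image_of_mem X (mem_univ ω))]
  refine sum_congr rfl fun a _ => ?_
  rw [mass, sum_mul]
  exact sum_congr rfl fun ω hω => by rw [(mem_filter.1 hω).2]

lemma sum_mass_image (X : Ω → α) : ∑ a ∈ univ.image X, mass p X a = ∑ ω, p ω := by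
  simpa using (sum_mul_comp_eq_sum_mass (p := p) X fun _ => 1).symm

lemma sum_mass_pair (X : Ω → α) (Z : Ω → β) (z : β) :
    ∑ x ∈ univ.image X, mass p (fun ω => (X ω, Z ω)) (x, z) = mass p Z z := by
  rw [mass, ← sum_fiberwise_of_maps_to (g := X) (t := univ.image X)
    (fun ω _ => mem_image_of_mem X (mem_univ ω))]
  refine sum_congr rfl fun x _ => ?_
  rw [mass, filter_filter]
  simp only [Prod.mk.injEq, and_comm]

lemma entr_eq_sum_mul_neg_log (X : Ω → α) :
    entr p X = ∑ ω, p ω * -log (mass p X (X ω)) := by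
  rw [sum_mul_comp_eq_sum_mass X fun a => -log (mass p X a), entr]
  exact sum_congr rfl fun a _ => by rw [negMulLog, mass]; ring

lemma sum_mul_mass_ratio_le (hp : ∀ ω, 0 ≤ p ω) (X : Ω → α) (Y : Ω → β) (Z : Ω → γ) :
    ∑ ω, p ω * (mass p (fun ω => (X ω, Z ω)) (X ω, Z ω) * mass p (fun ω => (Y ω, Z ω)) (Y ω, Z ω)
      / (mass p (fun ω => (X ω, Y ω, Z ω)) (X ω, Y ω, Z ω) * mass p Z (Z ω))) ≤ ∑ ω, p ω := by
  set W : Ω → α × β × γ := fun ω => (X ω, Y ω, Z ω)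
  let g : α × β × γ → ℝ := fun w =>
    mass p (fun ω => (X ω, Z ω)) (w.1, w.2.2) * mass p (fun ω => (Y ω, Z ω)) (w.2.1, w.2.2)
      / mass p Z w.2.2
  have hg : ∀ w, 0 ≤ g w := fun w =>
    div_nonneg (mul_nonneg (mass_nonneg hp _ _) (mass_nonneg hp _ _)) (mass_nonneg hp _ _)
  calc _ = ∑ ω, p ω * (g (W ω) / mass p W (W ω)) := by
          simp only [g, W, div_div, mul_comm (mass p Z _)]
    _ = ∑ w ∈ univ.image W, mass p W w * (g w / mass p W w) :=
          sum_mul_comp_eq_sum_mass W fun w => g w / mass p W w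
    _ ≤ ∑ w ∈ univ.image W, g w :=
          sum_le_sum fun w _ => mul_div_le_of_nonneg (mass_nonneg hp W w) (hg w)
    _ ≤ ∑ w ∈ univ.image X ×ˢ (univ.image Y ×ˢ univ.image Z), g w := by
          refine sum_le_sum_of_subset_of_nonneg (fun w hw => ?_) fun w _ _ => hg w
          obtain ⟨ω, -, rfl⟩ := mem_image.1 hw
          simp [W]
    _ = ∑ x ∈ univ.image X, ∑ z ∈ univ.image Z, ∑ y ∈ univ.image Y, g (x, y, z) := by
          simp only [sum_product]
          exact sum_congr rfl fun x _ => sum_comm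
    _ ≤ ∑ x ∈ univ.image X, ∑ z ∈ univ.image Z, mass p (fun ω => (X ω, Z ω)) (x, z) := by
          refine sum_le_sum fun x _ => sum_le_sum fun z _ => ?_
          simp only [g, mul_div_right_comm _ _ (mass p Z z), ← mul_sum, sum_mass_pair,
            mul_comm _ (mass p Z z)]
          exact mul_div_le_of_nonneg (mass_nonneg hp Z z) (mass_nonneg hp _ _)
    _ = ∑ ω, p ω := by
          rw [sum_comm]
          simp only [sum_mass_pair, sum_mass_image]

theorem entr_submodular (hp : ∀ ω, 0 ≤ p ω) (X : Ω → α) (Y : Ω → β) (Z : Ω → γ) :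
    entr p (fun ω => (X ω, Y ω, Z ω)) + entr p Z ≤
      entr p (fun ω => (X ω, Z ω)) + entr p (fun ω => (Y ω, Z ω)) := by
  have hratio := sum_mul_mass_ratio_le hp X Y Z
  have hpointwise := sum_le_sum (s := univ) fun ω _ => mul_neg_log_add_le_of_pos (hp ω)
    (mass_pos hp (fun ω => (X ω, Y ω, Z ω)) (ω := ω)) (mass_pos hp Z (ω := ω))
    (mass_pos hp (fun ω => (X ω, Z ω)) (ω := ω)) (mass_pos hp (fun ω => (Y ω, Z ω)) (ω := ω))
  simp only [sum_add_distrib, sum_sub_distrib] at hpointwise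
  simp only [entr_eq_sum_mul_neg_log]
  linarith

lemma entr_le_entr_of_determines (hp : ∀ ω, 0 ≤ p ω) {X : Ω → α} {Y : Ω → β}
    (h : Determines X Y) : entr p Y ≤ entr p X := by
  simp only [entr_eq_sum_mul_neg_log]
  refine sum_le_sum fun ω _ => ?_
  rcases (hp ω).eq_or_lt with h0 | h0
  · simp [← h0]
  · exact mul_le_mul_of_nonneg_left (neg_le_neg
      (log_le_log (mass_pos hp X h0) (mass_le_mass_of_determines hp h ω))) h0.le

lemma entr_pair_eq_left (hp : ∀ ω, 0 ≤ p ω) {X : Ω → α} {Z : Ω → γ} (h : Determines X Z) :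
    entr p (fun ω => (X ω, Z ω)) = entr p X :=
  le_antisymm (entr_le_entr_of_determines hp ((Determines.refl X).pair h))
    (entr_le_entr_of_determines hp (determines_fst X Z))

lemma entr_eq_zero_of_forall_eq (hsum : ∑ ω, p ω = 1) {X : Ω → α}
    (h : ∀ ω ω', X ω = X ω') : entr p X = 0 := by
  rw [entr_eq_sum_mul_neg_log]
  refine sum_eq_zero fun ω _ => ?_
  rw [mass, filter_true_of_mem fun ω' _ => h ω' ω, hsum, log_one, neg_zero, mul_zero]

theorem entr_add_entr_le_of_determines (hp : ∀ ω, 0 ≤ p ω) {X : Ω → α} {Y : Ω → β}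
    {Z : Ω → γ} {W : Ω → δ} (hXZ : Determines X Z) (hYZ : Determines Y Z)
    (hW : Determines (fun ω => (X ω, Y ω)) W) :
    entr p W + entr p Z ≤ entr p X + entr p Y := by
  have hW' : entr p W ≤ entr p (fun ω => (X ω, Y ω, Z ω)) :=
    entr_le_entr_of_determines hp
      (((determines_fst X _).pair ((determines_snd X _).trans (determines_fst Y Z))).trans hW)
  have := entr_submodular hp X Y Z
  rw [entr_pair_eq_left hp hXZ, entr_pair_eq_left hp hYZ] at this
  linarith

variable {ξ : Ω → ε}

lemma entr_add_entr_le_of_determines_of_indep (hp : ∀ ω, 0 ≤ p ω) {X : Ω → α} {Y : Ω → β}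
    (hXY : Determines X Y) (hX : entr p (fun ω => (X ω, ξ ω)) = entr p X)
    (hY : entr p (fun ω => (Y ω, ξ ω)) = entr p Y + entr p ξ) :
    entr p Y + entr p ξ ≤ entr p X := by
  rw [← hX, ← hY]
  exact entr_le_entr_of_determines hp (hXY.pairWith ξ)

lemma entr_add_entr_add_entr_le_of_determines_of_indep (hp : ∀ ω, 0 ≤ p ω) {X : Ω → α}
    {Y : Ω → β} {Z : Ω → γ} {W : Ω → δ} (hXZ : Determines X Z) (hYZ : Determines Y Z)
    (hW : Determines (fun ω => (X ω, Y ω)) W) (hX : entr p (fun ω => (X ω, ξ ω)) = entr p X)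
    (hY : entr p (fun ω => (Y ω, ξ ω)) = entr p Y)
    (hZ : entr p (fun ω => (Z ω, ξ ω)) = entr p Z + entr p ξ) :
    entr p W + entr p Z + entr p ξ ≤ entr p X + entr p Y := by
  have := entr_add_entr_le_of_determines hp (hXZ.pairWith ξ) (hYZ.pairWith ξ)
    ((((determines_fst _ _).trans (determines_fst X ξ)).pair
      ((determines_snd _ _).trans (determines_fst Y ξ))).trans hW)
  rw [hX, hY, hZ] at this
  linarith

end Entropy

section SecretSharing

variable {V T : Type*} [DecidableEq T] (S : V → Ω → T)

lemma entr_joint_empty (hsum : ∑ ω, p ω = 1) : entr p (joint S ∅) = 0 :=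
  entr_eq_zero_of_forall_eq hsum fun _ _ => funext fun v => absurd v.2 (notMem_empty v.1)

lemma entr_joint_mono (hp : ∀ ω, 0 ≤ p ω) {A B : Finset V} (h : B ⊆ A) :
    entr p (joint S B) ≤ entr p (joint S A) :=
  entr_le_entr_of_determines hp (determines_joint_of_subset S h)

lemma entr_joint_union_add_inter_le (hp : ∀ ω, 0 ≤ p ω) (A B : Finset V) :
    entr p (joint S (A ∪ B)) + entr p (joint S (A ∩ B)) ≤
      entr p (joint S A) + entr p (joint S B) :=
  entr_add_entr_le_of_determines hp (determines_joint_of_subset S inter_subset_left)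
    (determines_joint_of_subset S inter_subset_right) (determines_joint_union S A B)

variable {G : SimpleGraph V} {ξ : Ω → T}

lemma entr_joint_secret_eq_of_qualified (hp : ∀ ω, 0 ≤ p ω)
    (hdet : ∀ u v, G.Adj u v →
      entr p (fun ω => (S u ω, S v ω, ξ ω)) = entr p (fun ω => (S u ω, S v ω)))
    {A : Finset V} (hA : Qualified G A) :
    entr p (fun ω => (joint S A ω, ξ ω)) = entr p (joint S A) := by
  obtain ⟨u, hu, v, hv, huv⟩ := hA
  have hshares : Determines (joint S A) (fun ω => (S u ω, S v ω)) :=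
    fun _ _ h => Prod.ext (congrFun h ⟨u, hu⟩) (congrFun h ⟨v, hv⟩)
  have := entr_add_entr_le_of_determines hp (Y := fun ω => (S u ω, S v ω, ξ ω))
    (W := fun ω => (joint S A ω, ξ ω)) hshares (fun _ _ h => by simp_all)
    (fun _ _ h => by simp_all)
  rw [hdet u v huv] at this
  exact le_antisymm (by linarith) (entr_le_entr_of_determines hp (determines_fst _ _))

end SecretSharing

end EntropyMethod

open EntropyMethod

/-- the normalized entropy function of a secret sharing scheme
on a graph satisfies properties (a)–(e) of the entropy method. -/
theorem entropy_method_properties {V Ω T : Type*} [Fintype Ω] [DecidableEq T]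
    (G : SimpleGraph V) (p : Ω → ℝ)
    (hp : ∀ ω, 0 ≤ p ω) (hsum : ∑ ω, p ω = 1)
    (S : V → Ω → T) (ξ : Ω → T)
    (hξ : 0 < entr p ξ)
    (hdet : ∀ u v, G.Adj u v →
      entr p (fun ω => (S u ω, S v ω, ξ ω)) = entr p (fun ω => (S u ω, S v ω)))
    (hind : ∀ A : Finset V, ¬ Qualified G A →
      entr p (fun ω => (joint S A ω, ξ ω)) = entr p (joint S A) + entr p ξ) :
    (fun A : Finset V => entr p (joint S A) / entr p ξ) ∅ = 0 ∧
    (∀ A B : Finset V, B ⊆ A →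
      entr p (joint S B) / entr p ξ ≤ entr p (joint S A) / entr p ξ) ∧
    (∀ A B : Finset V,
      entr p (joint S (A ∪ B)) / entr p ξ + entr p (joint S (A ∩ B)) / entr p ξ ≤
        entr p (joint S A) / entr p ξ + entr p (joint S B) / entr p ξ) ∧
    (∀ A B : Finset V, B ⊆ A → Qualified G A → ¬ Qualified G B →
      entr p (joint S B) / entr p ξ + 1 ≤ entr p (joint S A) / entr p ξ) ∧
    (∀ A B : Finset V, Qualified G A → Qualified G B → ¬ Qualified G (A ∩ B) →
      entr p (joint S (A ∪ B)) / entr p ξ + entr p (joint S (A ∩ B)) / entr p ξ + 1 ≤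
        entr p (joint S A) / entr p ξ + entr p (joint S B) / entr p ξ) := by
  refine ⟨by simp [entr_joint_empty S hsum], fun A B hBA => ?_, fun A B => ?_,
    fun A B hBA hA hB => ?_, fun A B hA hB hAB => ?_⟩
  · exact div_le_div_of_nonneg_right (entr_joint_mono S hp hBA) hξ.le
  · rw [← add_div, ← add_div, div_le_div_iff_of_pos_right hξ]
    exact entr_joint_union_add_inter_le S hp A B
  · rw [div_add_one hξ.ne', div_le_div_iff_of_pos_right hξ]
    exact entr_add_entr_le_of_determines_of_indep hp (determines_joint_of_subset S hBA)
      (entr_joint_secret_eq_of_qualified S hp hdet hA) (hind B hB)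
  · rw [← add_div, ← add_div, div_add_one hξ.ne', div_le_div_iff_of_pos_right hξ]
    exact entr_add_entr_add_entr_le_of_determines_of_indep hp
      (determines_joint_of_subset S Finset.inter_subset_left)
      (determines_joint_of_subset S Finset.inter_subset_right) (determines_joint_union S A B)
      (entr_joint_secret_eq_of_qualified S hp hdet hA)
      (entr_joint_secret_eq_of_qualified S hp hdet hB) (hind _ hAB)
end

section
/- Let G be a finite simple graph with at least one edge, c the maximum size of a core of G, and consider any secret sharing scheme on G with secret ξ (H(ξ)>0) and shares S_v. Then max_v H(S_v)/H(ξ) ≥ 2 − 1/c, assuming the independent sequence bound f(X) ≥ |X|+1 holds for the normalized entropy function f and every core X of G. -/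
open scoped Classical

/-!
Order a core `X` as `x₁, …, x_c` so that every vertex after the first is adjacent to an earlier
one, which is possible because `X` induces a connected graph. When `x_k` (`k ≥ 3`) joins the
qualified set `{x₁, …, x_{k-1}}` through an edge `x_j x_k`, submodularity of entropy, applied to
that set and `{x_j, x_k}` with the secret adjoined, yields
`H(x₁ … x_k) + H(ξ) ≤ H(x₁ … x_{k-1}) + H(x_k)`, because both sets determine the secret while
their intersection `{x_j}` is independent of it. Summing, `H(X) + (c - 2) H(ξ) ≤ ∑ H(x_i)`;
together with the independent sequence bound `H(X) ≥ (c + 1) H(ξ)` the shares of `X` have total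
entropy at least `(2c - 1) H(ξ)`, so one of them reaches the average.
-/

open Finset

section Entropy

variable {Ω : Type*} [Fintype Ω] {p : Ω → ℝ}

noncomputable def pmass {S : Type*} [DecidableEq S] (p : Ω → ℝ) (X : Ω → S) (s : S) : ℝ :=
  ∑ ω ∈ univ.filter (fun ω => X ω = s), p ω

lemma le_pmass {S : Type*} [DecidableEq S] (hp : ∀ ω, 0 ≤ p ω) (X : Ω → S) (ω : Ω) :
    p ω ≤ pmass p X (X ω) :=
  single_le_sum (fun ω' _ => hp ω') (by simp)

lemma pmass_nonneg {S : Type*} [DecidableEq S] (hp : ∀ ω, 0 ≤ p ω) (X : Ω → S) (s : S) :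
    0 ≤ pmass p X s :=
  sum_nonneg fun ω _ => hp ω

lemma pmass_pos {S : Type*} [DecidableEq S] (hp : ∀ ω, 0 ≤ p ω) (X : Ω → S) {ω : Ω}
    (h : 0 < p ω) : 0 < pmass p X (X ω) :=
  h.trans_le (le_pmass hp X ω)

lemma sum_pmass {S : Type*} [DecidableEq S] (X : Ω → S) :
    ∑ s ∈ univ.image X, pmass p X s = ∑ ω, p ω :=
  sum_fiberwise_of_maps_to (fun ω _ => mem_image_of_mem X (mem_univ ω)) p

lemma sum_pmass_prod_left {S S' : Type*} [DecidableEq S] [DecidableEq S'] (X : Ω → S)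
    (Z : Ω → S') (z : S') :
    ∑ x ∈ univ.image X, pmass p (fun ω => (X ω, Z ω)) (x, z) = pmass p Z z := by
  rw [pmass, ← sum_fiberwise_of_maps_to (g := X) (fun ω _ => mem_image_of_mem X (mem_univ ω))]
  refine sum_congr rfl fun x _ => sum_congr ?_ fun _ _ => rfl
  ext ω
  simp [and_comm]

lemma entr_eq_sum {S : Type*} [DecidableEq S] (X : Ω → S) :
    entr p X = ∑ ω, p ω * -Real.log (pmass p X (X ω)) := by
  rw [entr, ← sum_fiberwise_of_maps_to (g := X) (fun ω _ => mem_image_of_mem X (mem_univ ω))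
    (fun ω => p ω * -Real.log (pmass p X (X ω)))]
  refine sum_congr rfl fun s _ => ?_
  have hfiber : ∀ ω ∈ univ.filter (X · = s),
      p ω * -Real.log (pmass p X (X ω)) = p ω * -Real.log (pmass p X s) :=
    fun ω hω => by rw [(mem_filter.mp hω).2]
  rw [sum_congr rfl hfiber, ← sum_mul, Real.negMulLog, pmass]
  ring

lemma sum_mul_div_pmass_le {S : Type*} [DecidableEq S] (W : Ω → S) {g : S → ℝ}
    (hg : ∀ s, 0 ≤ g s) :
    ∑ ω, p ω * (g (W ω) / pmass p W (W ω)) ≤ ∑ s ∈ univ.image W, g s := by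
  rw [← sum_fiberwise_of_maps_to (g := W) (fun ω _ => mem_image_of_mem W (mem_univ ω))]
  refine sum_le_sum fun s _ => ?_
  have hfiber : ∀ ω ∈ univ.filter (W · = s),
      p ω * (g (W ω) / pmass p W (W ω)) = p ω * (g s / pmass p W s) :=
    fun ω hω => by rw [(mem_filter.mp hω).2]
  rw [sum_congr rfl hfiber, ← sum_mul]
  change pmass p W s * (g s / pmass p W s) ≤ g s
  rcases eq_or_ne (pmass p W s) 0 with h | h
  · simpa [h] using hg s
  · rw [mul_div_cancel₀ _ h]

/-- Gibbs' inequality. -/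
lemma sum_mul_log_nonpos (hp : ∀ ω, 0 ≤ p ω) (hsum : ∑ ω, p ω = 1) {r : Ω → ℝ}
    (hr : ∀ ω, 0 < p ω → 0 < r ω) (hr1 : ∑ ω, p ω * r ω ≤ 1) :
    ∑ ω, p ω * Real.log (r ω) ≤ 0 := by
  have hpt : ∀ ω, p ω * Real.log (r ω) ≤ p ω * r ω - p ω := fun ω => by
    rcases (hp ω).eq_or_lt with h | h
    · simp [← h]
    · nlinarith [Real.log_le_sub_one_of_pos (hr ω h)]
  have := sum_le_sum fun ω (_ : ω ∈ univ) => hpt ω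
  rw [sum_sub_distrib, hsum] at this
  linarith

lemma entr_le_of_comp {S S' : Type*} [DecidableEq S] [DecidableEq S'] (hp : ∀ ω, 0 ≤ p ω)
    {X : Ω → S} {Y : Ω → S'} (φ : S → S') (h : ∀ ω, Y ω = φ (X ω)) :
    entr p Y ≤ entr p X := by
  rw [entr_eq_sum, entr_eq_sum]
  refine sum_le_sum fun ω _ => ?_
  rcases (hp ω).eq_or_lt with h0 | h0
  · simp [← h0]
  · have hX := h0.trans_le (le_pmass hp X ω)
    have hXY : pmass p X (X ω) ≤ pmass p Y (Y ω) :=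
      sum_le_sum_of_subset_of_nonneg (fun ω' => by simp_all) fun ω' _ _ => hp ω'
    gcongr

lemma sum_pmass_mul_pmass_div_le_one {S₁ S₂ S₃ : Type*} [DecidableEq S₁] [DecidableEq S₂]
    [DecidableEq S₃] (hp : ∀ ω, 0 ≤ p ω) (hsum : ∑ ω, p ω = 1)
    (X : Ω → S₁) (Y : Ω → S₂) (Z : Ω → S₃) :
    ∑ t ∈ univ.image (fun ω => ((X ω, Y ω), Z ω)),
      pmass p (fun ω => (X ω, Z ω)) (t.1.1, t.2) * pmass p (fun ω => (Y ω, Z ω)) (t.1.2, t.2) /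
        pmass p Z t.2 ≤ 1 := by
  calc _ ≤ ∑ t ∈ (univ.image X ×ˢ univ.image Y) ×ˢ univ.image Z,
        pmass p (fun ω => (X ω, Z ω)) (t.1.1, t.2) *
          pmass p (fun ω => (Y ω, Z ω)) (t.1.2, t.2) / pmass p Z t.2 := by
        refine sum_le_sum_of_subset_of_nonneg ?_ fun t _ _ => ?_
        · intro t
          simp only [mem_image, mem_univ, true_and, mem_product]
          rintro ⟨ω, rfl⟩
          exact ⟨⟨⟨ω, rfl⟩, ⟨ω, rfl⟩⟩, ⟨ω, rfl⟩⟩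
        · exact div_nonneg (mul_nonneg (pmass_nonneg hp _ _) (pmass_nonneg hp _ _))
            (pmass_nonneg hp _ _)
    _ = ∑ z ∈ univ.image Z, (∑ x ∈ univ.image X, pmass p (fun ω => (X ω, Z ω)) (x, z)) *
          (∑ y ∈ univ.image Y, pmass p (fun ω => (Y ω, Z ω)) (y, z)) / pmass p Z z := by
        rw [sum_product_right]
        refine sum_congr rfl fun z _ => ?_
        rw [sum_product, sum_mul_sum, sum_div]
        simp_rw [sum_div]
    _ = ∑ z ∈ univ.image Z, pmass p Z z := by
        simp only [sum_pmass_prod_left, mul_self_div_self]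
    _ = 1 := by rw [sum_pmass, hsum]

lemma entr_submod {S₁ S₂ S₃ : Type*} [DecidableEq S₁] [DecidableEq S₂] [DecidableEq S₃]
    (hp : ∀ ω, 0 ≤ p ω) (hsum : ∑ ω, p ω = 1) (X : Ω → S₁) (Y : Ω → S₂) (Z : Ω → S₃) :
    entr p (fun ω => ((X ω, Y ω), Z ω)) + entr p Z ≤
      entr p (fun ω => (X ω, Z ω)) + entr p (fun ω => (Y ω, Z ω)) := by
  let W := fun ω => ((X ω, Y ω), Z ω)
  let XZ := fun ω => (X ω, Z ω)
  let YZ := fun ω => (Y ω, Z ω)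
  -- `∑ p log r` is `-I(X; Y | Z)`
  let r := fun ω => pmass p XZ (XZ ω) * pmass p YZ (YZ ω) / pmass p Z (Z ω) / pmass p W (W ω)
  have hlog : ∀ ω, p ω * Real.log (r ω) =
      p ω * -Real.log (pmass p W (W ω)) + p ω * -Real.log (pmass p Z (Z ω)) -
        (p ω * -Real.log (pmass p XZ (XZ ω)) + p ω * -Real.log (pmass p YZ (YZ ω))) := by
    intro ω
    rcases (hp ω).eq_or_lt with h | h
    · simp [← h]
    · have hW := pmass_pos hp W h
      have hZ := pmass_pos hp Z h
      have hXZ := pmass_pos hp XZ h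
      have hYZ := pmass_pos hp YZ h
      rw [Real.log_div (by positivity) hW.ne', Real.log_div (by positivity) hZ.ne',
        Real.log_mul hXZ.ne' hYZ.ne']
      ring
  have hr : ∀ ω, 0 < p ω → 0 < r ω := fun ω h =>
    div_pos (div_pos (mul_pos (pmass_pos hp XZ h) (pmass_pos hp YZ h)) (pmass_pos hp Z h))
      (pmass_pos hp W h)
  have hr1 : ∑ ω, p ω * r ω ≤ 1 :=
    (sum_mul_div_pmass_le W (g := fun t =>
      pmass p XZ (t.1.1, t.2) * pmass p YZ (t.1.2, t.2) / pmass p Z t.2)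
      fun t => div_nonneg (mul_nonneg (pmass_nonneg hp _ _) (pmass_nonneg hp _ _))
        (pmass_nonneg hp _ _)).trans (sum_pmass_mul_pmass_div_le_one hp hsum X Y Z)
  have gibbs := sum_mul_log_nonpos hp hsum hr hr1
  rw [sum_congr rfl fun ω _ => hlog ω, sum_sub_distrib, sum_add_distrib, sum_add_distrib,
    ← entr_eq_sum, ← entr_eq_sum, ← entr_eq_sum, ← entr_eq_sum] at gibbs
  linarith

lemma entr_const {S : Type*} [DecidableEq S] (hsum : ∑ ω, p ω = 1) (s : S) :
    entr p (fun _ => s) = 0 := by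
  simp [entr_eq_sum, pmass, hsum]

lemma entr_prod_le {S₁ S₂ : Type*} [DecidableEq S₁] [DecidableEq S₂] (hp : ∀ ω, 0 ≤ p ω)
    (hsum : ∑ ω, p ω = 1) (X : Ω → S₁) (Y : Ω → S₂) :
    entr p (fun ω => (X ω, Y ω)) ≤ entr p X + entr p Y := by
  have h := entr_submod hp hsum X Y fun _ => ()
  have hXY := entr_le_of_comp hp (X := fun ω => ((X ω, Y ω), ())) Prod.fst fun _ => rfl
  have hX := entr_le_of_comp hp (X := X) (Y := fun ω => (X ω, ())) (·, ()) fun _ => rfl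
  have hY := entr_le_of_comp hp (X := Y) (Y := fun ω => (Y ω, ())) (·, ()) fun _ => rfl
  linarith [entr_const (p := p) hsum ()]

end Entropy

section Joint

variable {V Ω T : Type*} [Fintype Ω] [DecidableEq T] {p : Ω → ℝ} (S : V → Ω → T)

lemma entr_joint_singleton_le (hp : ∀ ω, 0 ≤ p ω) (v : V) :
    entr p (joint S {v}) ≤ entr p (S v) :=
  entr_le_of_comp hp (fun t _ => t) fun ω => funext fun a => by
    simp [joint, mem_singleton.mp a.2]

lemma entr_joint_union_le_of_comp {U : Type*} [DecidableEq U] (hp : ∀ ω, 0 ≤ p ω)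
    {A B : Finset V} {Y : Ω → U} (f : U → {x // x ∈ A} → T) (g : U → {x // x ∈ B} → T)
    (hA : ∀ ω, joint S A ω = f (Y ω)) (hB : ∀ ω, joint S B ω = g (Y ω)) :
    entr p (joint S (A ∪ B)) ≤ entr p Y := by
  refine entr_le_of_comp hp (fun y a => if h : a.1 ∈ A then f y ⟨a.1, h⟩
    else g y ⟨a.1, (mem_union.mp a.2).resolve_left h⟩) fun ω => funext fun a => ?_
  split_ifs with h
  · rw [← hA]; rfl
  · rw [← hB]; rfl

lemma entr_joint_union_le (hp : ∀ ω, 0 ≤ p ω) (hsum : ∑ ω, p ω = 1) (A B : Finset V) :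
    entr p (joint S (A ∪ B)) ≤ entr p (joint S A) + entr p (joint S B) :=
  (entr_joint_union_le_of_comp S hp (Y := fun ω => (joint S A ω, joint S B ω)) Prod.fst
    Prod.snd (fun _ => rfl) fun _ => rfl).trans (entr_prod_le hp hsum _ _)

lemma entr_joint_union_add_inter_add_le (hp : ∀ ω, 0 ≤ p ω) (hsum : ∑ ω, p ω = 1)
    (ξ : Ω → T) {A B : Finset V}
    (hA : entr p (fun ω => (joint S A ω, ξ ω)) = entr p (joint S A))
    (hB : entr p (fun ω => (joint S B ω, ξ ω)) = entr p (joint S B))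
    (hAB : entr p (fun ω => (joint S (A ∩ B) ω, ξ ω)) = entr p (joint S (A ∩ B)) + entr p ξ) :
    entr p (joint S (A ∪ B)) + entr p (joint S (A ∩ B)) + entr p ξ ≤
      entr p (joint S A) + entr p (joint S B) := by
  have h := entr_submod hp hsum (joint S A) (joint S B) fun ω => (joint S (A ∩ B) ω, ξ ω)
  have hU := entr_joint_union_le_of_comp S hp
    (Y := fun ω => ((joint S A ω, joint S B ω), (joint S (A ∩ B) ω, ξ ω)))
    (fun y => y.1.1) (fun y => y.1.2) (fun _ => rfl) fun _ => rfl
  have hA' := entr_le_of_comp hp (X := fun ω => (joint S A ω, ξ ω))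
    (Y := fun ω => (joint S A ω, (joint S (A ∩ B) ω, ξ ω)))
    (fun y => (y.1, fun a => y.1 ⟨a.1, (mem_inter.mp a.2).1⟩, y.2)) fun _ => rfl
  have hB' := entr_le_of_comp hp (X := fun ω => (joint S B ω, ξ ω))
    (Y := fun ω => (joint S B ω, (joint S (A ∩ B) ω, ξ ω)))
    (fun y => (y.1, fun a => y.1 ⟨a.1, (mem_inter.mp a.2).2⟩, y.2)) fun _ => rfl
  linarith

end Joint

section Graph

variable {V : Type*} {G : SimpleGraph V}

lemma Qualified.mono_s14 {A B : Finset V} (h : Qualified G A) (hAB : A ⊆ B) : Qualified G B :=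
  let ⟨u, hu, v, hv, huv⟩ := h
  ⟨u, hAB hu, v, hAB hv, huv⟩

lemma qualified_pair {u v : V} (h : G.Adj u v) : Qualified G {u, v} :=
  ⟨u, by simp, v, by simp, h⟩

lemma not_qualified_singleton (u : V) : ¬ Qualified G {u} := by
  rintro ⟨x, hx, y, hy, hxy⟩
  rw [mem_singleton] at hx hy
  subst hx hy
  exact G.irrefl hxy

lemma exists_adj_of_induce_connected {X B : Finset V} (hX : (G.induce (X : Set V)).Connected)
    (hBX : B ⊆ X) (hB : B.Nonempty) (hne : B ≠ X) :
    ∃ u ∈ B, ∃ v ∈ X, v ∉ B ∧ G.Adj u v := by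
  obtain ⟨u, hu⟩ := hB
  obtain ⟨v, hvX, hvB⟩ := exists_of_ssubset (hBX.ssubset_of_ne hne)
  obtain ⟨w⟩ := hX.preconnected ⟨u, hBX hu⟩ ⟨v, hvX⟩
  obtain ⟨d, -, hd₁, hd₂⟩ := w.exists_boundary_dart {x : (X : Set V) | (x : V) ∈ B} hu hvB
  exact ⟨d.fst, hd₁, d.snd, d.snd.2, hd₂, d.adj⟩

lemma induction_of_induce_connected {X A : Finset V} (hX : (G.induce (X : Set V)).Connected)
    {P : Finset V → Prop} (hAX : A ⊆ X) (hA : A.Nonempty) (hPA : P A)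
    (step : ∀ B ⊆ X, P B → ∀ u ∈ B, ∀ v ∈ X, v ∉ B → G.Adj u v → P (insert v B)) : P X := by
  suffices ∀ n, ∀ B ⊆ X, B.Nonempty → P B → (X \ B).card = n → P X from
    this _ A hAX hA hPA rfl
  intro n
  induction n with
  | zero =>
    intro B hBX _ hPB hcard
    rwa [← hBX.antisymm (sdiff_eq_empty_iff_subset.mp (card_eq_zero.mp hcard))]
  | succ n ih =>
    intro B hBX hB hPB hcard
    have hne : B ≠ X := by
      rintro rfl
      simp at hcard
    obtain ⟨u, hu, v, hvX, hvB, huv⟩ := exists_adj_of_induce_connected hX hBX hB hne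
    refine ih (insert v B) (insert_subset hvX hBX) (insert_nonempty _ _)
      (step B hBX hPB u hu v hvX hvB huv) ?_
    rw [sdiff_insert, card_erase_of_mem (mem_sdiff.mpr ⟨hvX, hvB⟩), hcard, Nat.add_sub_cancel]

end Graph

section SecretSharing

variable {V Ω T : Type*} [Fintype Ω] [DecidableEq T] {G : SimpleGraph V} {p : Ω → ℝ}
  {S : V → Ω → T} {ξ : Ω → T}

lemma entr_joint_insert_add_le (hp : ∀ ω, 0 ≤ p ω) (hsum : ∑ ω, p ω = 1)
    (hdet : ∀ A : Finset V, Qualified G A →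
      entr p (fun ω => (joint S A ω, ξ ω)) = entr p (joint S A))
    (hind : ∀ A : Finset V, ¬ Qualified G A →
      entr p (fun ω => (joint S A ω, ξ ω)) = entr p (joint S A) + entr p ξ)
    {A : Finset V} (hA : Qualified G A) {u v : V} (hu : u ∈ A) (hv : v ∉ A) (huv : G.Adj u v) :
    entr p (joint S (insert v A)) + entr p ξ ≤ entr p (joint S A) + entr p (S v) := by
  have hunion : A ∪ {u, v} = insert v A := by
    ext x
    simp only [mem_union, mem_insert, mem_singleton]
    constructor
    · rintro (h | rfl | rfl) <;> simp_all
    · rintro (rfl | h) <;> simp_all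
  have hinter : A ∩ {u, v} = {u} := by
    ext x
    simp only [mem_inter, mem_insert, mem_singleton]
    constructor
    · rintro ⟨h, rfl | rfl⟩
      · rfl
      · exact absurd h hv
    · rintro rfl
      exact ⟨hu, Or.inl rfl⟩
  have hu_ind := hind {u} (not_qualified_singleton u)
  rw [← hinter] at hu_ind
  have h := entr_joint_union_add_inter_add_le S hp hsum ξ (hdet A hA)
    (hdet _ (qualified_pair huv)) hu_ind
  rw [hunion, hinter] at h
  have hpair := entr_joint_union_le S hp hsum {u} {v}
  rw [← insert_eq] at hpair
  linarith [entr_joint_singleton_le S hp v]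

lemma entr_joint_add_le_sum_of_induce_connected (hp : ∀ ω, 0 ≤ p ω) (hsum : ∑ ω, p ω = 1)
    (hξ : 0 ≤ entr p ξ)
    (hdet : ∀ A : Finset V, Qualified G A →
      entr p (fun ω => (joint S A ω, ξ ω)) = entr p (joint S A))
    (hind : ∀ A : Finset V, ¬ Qualified G A →
      entr p (fun ω => (joint S A ω, ξ ω)) = entr p (joint S A) + entr p ξ)
    {X : Finset V} (hX : (G.induce (X : Set V)).Connected) :
    entr p (joint S X) + ((X.card : ℝ) - 2) * entr p ξ ≤ ∑ v ∈ X, entr p (S v) := by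
  obtain ⟨⟨x, hx⟩⟩ := hX.nonempty
  by_cases hXx : {x} = X
  · subst hXx
    simp only [card_singleton, sum_singleton, Nat.cast_one]
    linarith [entr_joint_singleton_le S hp x]
  obtain ⟨u, hu, v, hvX, hvu, huv⟩ :=
    exists_adj_of_induce_connected hX (singleton_subset_iff.mpr hx) (singleton_nonempty x) hXx
  rw [mem_singleton] at hu
  subst hu
  refine (induction_of_induce_connected hX
    (P := fun B => Qualified G B ∧
      entr p (joint S B) + ((B.card : ℝ) - 2) * entr p ξ ≤ ∑ w ∈ B, entr p (S w))
    (insert_subset hvX (singleton_subset_iff.mpr hx)) (insert_nonempty _ _) ⟨?_, ?_⟩ ?_).2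
  · exact (qualified_pair huv).mono_s14 (by simp [subset_iff])
  · have hpair := entr_joint_union_le S hp hsum {v} {u}
    rw [← insert_eq] at hpair
    rw [card_insert_of_notMem hvu, sum_insert hvu, card_singleton, sum_singleton]
    push_cast
    linarith [entr_joint_singleton_le S hp u, entr_joint_singleton_le S hp v]
  · rintro B - ⟨hB, hbound⟩ w hw y - hy hwy
    refine ⟨hB.mono_s14 (subset_insert _ _), ?_⟩
    rw [card_insert_of_notMem hy, sum_insert hy]
    push_cast
    linarith [entr_joint_insert_add_le hp hsum hdet hind hB hw hy hwy]

end SecretSharing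

theorem load_lower_bound_general {V Ω T : Type*} [Fintype Ω] [DecidableEq T]
    (G : SimpleGraph V)
    (c : ℕ) (hc : IsGreatest {n : ℕ | ∃ X : Finset V, IsCore G X ∧ X.card = n} c)
    (p : Ω → ℝ) (hp : ∀ ω, 0 ≤ p ω) (hsum : ∑ ω, p ω = 1)
    (S : V → Ω → T) (ξ : Ω → T)
    (hξ : 0 < entr p ξ)
    (hdet : ∀ A : Finset V, Qualified G A →
      entr p (fun ω => (joint S A ω, ξ ω)) = entr p (joint S A))
    (hind : ∀ A : Finset V, ¬ Qualified G A →
      entr p (fun ω => (joint S A ω, ξ ω)) = entr p (joint S A) + entr p ξ)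
    (hseq : ∀ X : Finset V, IsCore G X →
      (X.card : ℝ) + 1 ≤ entr p (joint S X) / entr p ξ) :
    ∃ v : V, 2 - 1 / (c : ℝ) ≤ entr p (S v) / entr p ξ := by
  obtain ⟨X, hXcore, rfl⟩ := hc.1
  have hX := hXcore.1
  have hchain := entr_joint_add_le_sum_of_induce_connected hp hsum hξ.le hdet hind hX
  have hlower := (le_div_iff₀ hξ).mp (hseq X hXcore)
  obtain ⟨⟨x, hx⟩⟩ := hX.nonempty
  have hcard : (0 : ℝ) < X.card := by exact_mod_cast card_pos.mpr ⟨x, hx⟩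
  have havg : ∑ _v ∈ X, (2 - 1 / (X.card : ℝ)) * entr p ξ ≤ ∑ v ∈ X, entr p (S v) := by
    rw [sum_const, nsmul_eq_mul, ← mul_assoc, mul_sub, mul_one_div_cancel hcard.ne']
    linarith
  obtain ⟨v, -, hv⟩ := exists_le_of_sum_le ⟨x, hx⟩ havg
  exact ⟨v, (le_div_iff₀ hξ).mpr hv⟩

/-- any secret sharing scheme on a graph with maximum core size
`c` has some share of normalized entropy at least `2 - 1/c`, assuming the
independent sequence bound for cores. -/
theorem load_lower_bound {V Ω T : Type*} [Fintype Ω] [DecidableEq T]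
    (G : SimpleGraph V) (hedge : ∃ u v, G.Adj u v)
    (c : ℕ) (hc : IsGreatest {n : ℕ | ∃ X : Finset V, IsCore G X ∧ X.card = n} c)
    (p : Ω → ℝ) (hp : ∀ ω, 0 ≤ p ω) (hsum : ∑ ω, p ω = 1)
    (S : V → Ω → T) (ξ : Ω → T)
    (hξ : 0 < entr p ξ)
    (hdet : ∀ A : Finset V, Qualified G A →
      entr p (fun ω => (joint S A ω, ξ ω)) = entr p (joint S A))
    (hind : ∀ A : Finset V, ¬ Qualified G A →
      entr p (fun ω => (joint S A ω, ξ ω)) = entr p (joint S A) + entr p ξ)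
    (hseq : ∀ X : Finset V, IsCore G X →
      (X.card : ℝ) + 1 ≤ entr p (joint S X) / entr p ξ) :
    ∃ v : V, 2 - 1 / (c : ℝ) ≤ entr p (S v) / entr p ξ :=
  load_lower_bound_general G c hc p hp hsum S ξ hξ hdet hind hseq
end

section
/- Let G be a finite tree and suppose for each edge uv we assign nonnegative integers d(u→v) and d(v→u) with d(u→v)+d(v→u)=c (c a fixed positive integer), such that for every non-leaf vertex v, the total number of incoming edges ∑_u d(u→v) minus the minimum over neighbors u of d(u→v) is at most c−1, and leaves have all c edges incoming. Then the stars obtained by grouping at each vertex v its outgoing multi-edges into max_u d(v→u) stars centered at v yield a star packing covering each edge of G exactly c times and each vertex at most 2c−1 times. -/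
open scoped Classical

/-!
At a vertex `v`, the `t`-th star (`t < max_u d(v→u)`) takes every neighbour `u` with
`t < d(v→u)`, so exactly `d(v→u)` stars centred at `v` contain `u` and each edge is covered
`d(u→v) + d(v→u) = c` times. A vertex `x` is the centre of `max_w d(x→w)` stars and a leaf of
`∑_w d(w→x)` of them. A leaf of the tree receives all `c` arcs of its edge and sends none.
Otherwise let `u` be the neighbour sending the fewest arcs to `x`: then every
`d(x→w) = c - d(w→x) ≤ c - d(u→x)`, while `∑_w d(w→x) ≤ c - 1 + d(u→x)`.
-/

open Finset

namespace GraphStar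

variable {V : Type*} {G : SimpleGraph V}

lemma ite_memE_eq_add (S : GraphStar G) {u v : V} (huv : u ≠ v) :
    (if S.memE u v then 1 else 0 : ℕ) =
      (if S.center = u ∧ v ∈ S.leaves then 1 else 0) +
        (if S.center = v ∧ u ∈ S.leaves then 1 else 0) := by
  unfold memE
  by_cases hu : u = S.center <;> by_cases hv : v = S.center <;> simp_all [eq_comm]

lemma ite_memV_le (S : GraphStar G) (x : V) :
    (if S.memV x then 1 else 0 : ℕ) ≤
      (if S.center = x then 1 else 0) + (if x ∈ S.leaves then 1 else 0) := by
  unfold memV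
  split_ifs <;> simp_all [eq_comm]

end GraphStar

lemma Fin.sum_ite_val_lt_of_le {M k : ℕ} (hk : k ≤ M) :
    ∑ t : Fin M, (if (t : ℕ) < k then 1 else 0) = k := by
  rw [sum_boole, Nat.cast_id, Fin.card_filter_val_lt, min_eq_right hk]

section Packing

variable {V : Type*} [Fintype V] {G : SimpleGraph V} {d : V → V → ℕ}
  (hd0 : ∀ u v, ¬ G.Adj u v → d u v = 0)

def starAt (p : Σ v : V, Fin (univ.sup (d v))) : GraphStar G where
  center := p.1
  leaves := {u | (p.2 : ℕ) < d p.1 u}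
  nonempty := by
    obtain ⟨u, -, hu⟩ := Finset.lt_sup_iff.mp p.2.isLt
    exact ⟨u, by simpa using hu⟩
  adj u hu := by
    by_contra h
    simp [hd0 _ _ h] at hu

lemma sum_starAt_arc (v u : V) :
    ∑ p, (if (starAt hd0 p).center = v ∧ u ∈ (starAt hd0 p).leaves then 1 else 0) =
      d v u := by
  rw [Fintype.sum_sigma, Fintype.sum_eq_single v fun w hw => by simp [starAt, hw]]
  simpa [starAt] using Fin.sum_ite_val_lt_of_le (le_sup (f := d v) (mem_univ u))

lemma sum_starAt_center (v : V) :
    ∑ p, (if (starAt hd0 p).center = v then 1 else 0) = univ.sup (d v) := by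
  rw [Fintype.sum_sigma, Fintype.sum_eq_single v fun w hw => by simp [starAt, hw]]
  simp [starAt]

lemma sum_starAt_leaf (x : V) :
    ∑ p, (if x ∈ (starAt hd0 p).leaves then 1 else 0) = ∑ w, d w x := by
  rw [Fintype.sum_sigma]
  exact sum_congr rfl fun w _ => by
    simpa [starAt] using Fin.sum_ite_val_lt_of_le (le_sup (f := d w) (mem_univ x))

lemma sum_starAt_memE {u v : V} (huv : u ≠ v) :
    ∑ p, (if (starAt hd0 p).memE u v then 1 else 0) = d u v + d v u := by
  simp only [GraphStar.ite_memE_eq_add _ huv, sum_add_distrib, sum_starAt_arc]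

lemma sum_starAt_memV_le (x : V) :
    ∑ p, (if (starAt hd0 p).memV x then 1 else 0) ≤ univ.sup (d x) + ∑ w, d w x := by
  rw [← sum_starAt_center hd0, ← sum_starAt_leaf hd0, ← sum_add_distrib]
  exact sum_le_sum fun p _ => GraphStar.ite_memV_le _ x

end Packing

section Orientation

variable {V : Type*} [Fintype V] {G : SimpleGraph V} {c : ℕ} {d : V → V → ℕ}
  (hd0 : ∀ u v, ¬ G.Adj u v → d u v = 0)
include hd0

lemma sum_in_eq_of_forall_adj_eq {x u : V} (huniq : ∀ w, G.Adj x w → w = u) :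
    ∑ w, d w x = d u x :=
  Fintype.sum_eq_single u fun w hw => hd0 w x fun h => hw (huniq w h.symm)

variable (hd : ∀ u v, G.Adj u v → d u v + d v u = c)
include hd

lemma sup_out_eq_zero_of_forall_in_eq {x : V} (hx : ∀ u, G.Adj u x → d u x = c) :
    univ.sup (d x) = 0 :=
  Nat.le_zero.mp <| Finset.sup_le fun w _ => by
    by_cases h : G.Adj x w
    · have := hd x w h
      have := hx w h.symm
      omega
    · exact (hd0 x w h).le

lemma exists_adj_sup_out_le {x : V} (hx : ∃ u, G.Adj u x) :
    ∃ u, G.Adj u x ∧ univ.sup (d x) ≤ c - d u x := by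
  obtain ⟨u0, hu0⟩ := hx
  obtain ⟨u, hu, hmin⟩ := exists_min_image {w | G.Adj w x} (d · x) ⟨u0, by simpa using hu0⟩
  rw [mem_filter_univ] at hu
  refine ⟨u, hu, Finset.sup_le fun w _ => ?_⟩
  by_cases h : G.Adj x w
  · have := hd x w h
    have := hmin w (by simpa using h.symm)
    omega
  · simp [hd0 x w h]

lemma sup_out_add_sum_in_le (hc : 0 < c) (x : V)
    (hleaf : (∃! u, G.Adj x u) → ∀ u, G.Adj u x → d u x = c)
    (hnonleaf : ¬ (∃! u, G.Adj x u) → ∀ u, G.Adj u x → (∑ w, d w x) - d u x ≤ c - 1) :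
    univ.sup (d x) + ∑ w, d w x ≤ 2 * c - 1 := by
  by_cases hlf : ∃! u, G.Adj x u
  · obtain ⟨u, hu, huniq⟩ := hlf
    rw [sup_out_eq_zero_of_forall_in_eq hd0 hd (hleaf ⟨u, hu, huniq⟩),
      sum_in_eq_of_forall_adj_eq hd0 huniq, hleaf ⟨u, hu, huniq⟩ u hu.symm]
    omega
  by_cases hnb : ∃ u, G.Adj u x
  · obtain ⟨u, hu, hsup⟩ := exists_adj_sup_out_le hd0 hd hnb
    have hin := hnonleaf hlf u hu
    have hle : d u x ≤ c := hd u x hu ▸ Nat.le_add_right _ _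
    have hle_sum : d u x ≤ ∑ w, d w x :=
      single_le_sum (f := (d · x)) (fun _ _ => Nat.zero_le _) (mem_univ u)
    omega
  · push Not at hnb
    have := sup_out_eq_zero_of_forall_in_eq hd0 hd fun u h => (hnb u h).elim
    have : ∑ w, d w x = 0 := sum_eq_zero fun w _ => hd0 w x (hnb w)
    omega

end Orientation

theorem directed_orientation_star_packing_general {V : Type*} [Fintype V]
    (G : SimpleGraph V) (c : ℕ) (hc : 0 < c)
    (d : V → V → ℕ)
    (hd : ∀ u v, G.Adj u v → d u v + d v u = c)
    (hd0 : ∀ u v, ¬ G.Adj u v → d u v = 0)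
    (hleaf : ∀ v, (∃! u, G.Adj v u) → ∀ u, G.Adj u v → d u v = c)
    (hnonleaf : ∀ v, ¬ (∃! u, G.Adj v u) →
      ∀ u, G.Adj u v → (∑ x, d x v) - d u v ≤ c - 1) :
    ∃ (n : ℕ) (st : Fin n → GraphStar G) (m : Fin n → ℕ),
      (∀ i, 0 < m i) ∧
      (∀ v u, G.Adj v u →
        ∑ i, (if (st i).center = v ∧ u ∈ (st i).leaves then m i else 0) = d v u) ∧
      (∀ v : V, ∑ i, (if (st i).center = v then m i else 0) =
        Finset.univ.sup (fun u => d v u)) ∧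
      (∀ u v, G.Adj u v → ∑ i, (if (st i).memE u v then m i else 0) = c) ∧
      (∀ x : V, ∑ i, (if (st i).memV x then m i else 0) ≤ 2 * c - 1) := by
  let e := (Fintype.equivFin (Σ v : V, Fin (univ.sup (d v)))).symm
  refine ⟨_, fun i => starAt hd0 (e i), fun _ => 1, fun _ => one_pos, fun v u _ => ?_,
    fun v => ?_, fun u v huv => ?_, fun x => ?_⟩
  · rw [← sum_starAt_arc hd0 v u]
    exact Fintype.sum_equiv e _ _ fun _ => rfl
  · rw [← sum_starAt_center hd0 v]
    exact Fintype.sum_equiv e _ _ fun _ => rfl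
  · rw [← hd u v huv, ← sum_starAt_memE hd0 huv.ne]
    exact Fintype.sum_equiv e _ _ fun _ => rfl
  · calc _ = ∑ p, (if (starAt hd0 p).memV x then 1 else 0) :=
          Fintype.sum_equiv e _ _ fun _ => rfl
      _ ≤ univ.sup (d x) + ∑ w, d w x := sum_starAt_memV_le hd0 x
      _ ≤ 2 * c - 1 := sup_out_add_sum_in_le hd0 hd hc x (hleaf x) (hnonleaf x)

/-- orienting each edge of a tree into `d(u→v)` plus `d(v→u) = c`
directed multi-edges so that each non-leaf vertex has (incoming total) − (min
incoming from a single neighbor) ≤ c − 1 and leaves have all `c` edges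
incoming, the stars obtained by grouping the outgoing multi-edges at each
vertex (with `max_u d(v→u)` stars centered at `v`, the star multiplicities
towards a neighbor `u` summing to `d(v→u)`) form a star packing covering each
edge exactly `c` times and each vertex at most `2c − 1` times. -/
theorem directed_orientation_star_packing {V : Type*} [Fintype V]
    (G : SimpleGraph V) (hG : G.IsTree) (c : ℕ) (hc : 0 < c)
    (d : V → V → ℕ)
    (hd : ∀ u v, G.Adj u v → d u v + d v u = c)
    (hd0 : ∀ u v, ¬ G.Adj u v → d u v = 0)
    (hleaf : ∀ v, (∃! u, G.Adj v u) → ∀ u, G.Adj u v → d u v = c)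
    (hnonleaf : ∀ v, ¬ (∃! u, G.Adj v u) →
      ∀ u, G.Adj u v → (∑ x, d x v) - d u v ≤ c - 1) :
    ∃ (n : ℕ) (st : Fin n → GraphStar G) (m : Fin n → ℕ),
      (∀ i, 0 < m i) ∧
      (∀ v u, G.Adj v u →
        ∑ i, (if (st i).center = v ∧ u ∈ (st i).leaves then m i else 0) = d v u) ∧
      (∀ v : V, ∑ i, (if (st i).center = v then m i else 0) =
        Finset.univ.sup (fun u => d v u)) ∧
      (∀ u v, G.Adj u v → ∑ i, (if (st i).memE u v then m i else 0) = c) ∧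
      (∀ x : V, ∑ i, (if (st i).memV x then m i else 0) ≤ 2 * c - 1) :=
  directed_orientation_star_packing_general G c hc d hd hd0 hleaf hnonleaf
end

section
/- For every finite simple graph G with at least one edge, the maximum core size c(G) and the star cover rate s(G) satisfy 2 − 1/c(G) ≤ s(G). -/
open scoped Classical

lemma exists_closer {V : Type*} {G : SimpleGraph V} (hG : G.Connected) (r0 u : V) (h : u ≠ r0) :
    ∃ v, G.Adj u v ∧ G.dist v r0 < G.dist u r0 := by
  obtain ⟨p, hp⟩ := hG.exists_walk_length_eq_dist u r0
  cases p with
  | nil => exact absurd rfl h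
  | cons ha q =>
    refine ⟨_, ha, ?_⟩
    have h1 : G.dist _ r0 ≤ q.length := SimpleGraph.dist_le q
    simp [SimpleGraph.Walk.length_cons] at hp
    omega

lemma star_count {V : Type*} (G : SimpleGraph V) (X : Finset V) (g p : V → V) (r0 : V)
    (hg : ∀ x ∈ X, g x ∉ X ∧ G.Adj x (g x) ∧ ∀ y ∈ X, G.Adj y (g x) → y = x)
    (hp : ∀ x ∈ X.erase r0, p x ∈ X ∧ G.Adj x (p x))
    (hpd : ∀ x ∈ X.erase r0, ∀ y ∈ X.erase r0, p x = y → p y ≠ x)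
    (S : GraphStar G) :
    (X.filter (fun x => S.memE x (g x))).card
      + ((X.erase r0).filter (fun x => S.memE x (p x))).card
      ≤ (X.filter (fun v => S.memV v)).card := by
  by_cases hzX : S.center ∈ X
  · have hPcard : (X.filter (fun x => S.memE x (g x))).card ≤ 1 := by
      have hP : (X.filter (fun x => S.memE x (g x))) ⊆ {S.center} := by
        intro x hx
        simp only [Finset.mem_filter] at hx
        obtain ⟨hxX, hmem⟩ := hx
        rcases hmem with ⟨h1, _⟩ | ⟨h1, _⟩
        · simpa using h1
        · exact absurd (h1 ▸ hzX) (hg x hxX).1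
      simpa using Finset.card_le_card hP
    set R := X.filter (fun v => S.memV v) with hR
    have hzR : S.center ∈ R := Finset.mem_filter.mpr ⟨hzX, Or.inl rfl⟩
    have hT : ((X.erase r0).filter (fun x => S.memE x (p x))).card
        ≤ (R.erase S.center).card := by
      apply Finset.card_le_card_of_injOn (fun x => if x = S.center then p x else x)
      · intro x hx
        simp only [Finset.mem_coe, Finset.mem_filter] at hx
        obtain ⟨hxe, hmem⟩ := hx
        have hxX := Finset.mem_of_mem_erase hxe
        by_cases hxz : x = S.center
        · have hpz : p x ∈ S.leaves := by
            rcases hmem with ⟨_, h2⟩ | ⟨h1, _⟩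
            · exact h2
            · exfalso
              have hadj := (hp x hxe).2
              rw [h1.trans hxz.symm] at hadj
              exact G.loopless.irrefl x hadj
          have hpX := (hp x hxe).1
          have hne : p x ≠ x := by
            intro he
            have hadj := (hp x hxe).2
            rw [he] at hadj
            exact G.loopless.irrefl x hadj
          simp only [if_pos hxz]
          exact Finset.mem_erase.mpr ⟨fun h => hne (h.trans hxz.symm),
            Finset.mem_filter.mpr ⟨hpX, Or.inr hpz⟩⟩
        · have hxl : x ∈ S.leaves := by
            rcases hmem with ⟨h1, _⟩ | ⟨_, h2⟩
            · exact absurd h1 hxz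
            · exact h2
          simp only [if_neg hxz]
          exact Finset.mem_erase.mpr ⟨hxz, Finset.mem_filter.mpr ⟨hxX, Or.inr hxl⟩⟩
      · intro x hx y hy hxy
        simp only [Finset.mem_coe, Finset.mem_filter] at hx hy
        by_cases hxz : x = S.center <;> by_cases hyz : y = S.center
        · exact hxz.trans hyz.symm
        · exfalso
          simp only [if_pos hxz, if_neg hyz] at hxy
          have hy2 : p y = x := by
            rcases hy.2 with ⟨h1, _⟩ | ⟨h1, _⟩
            · exact absurd h1 hyz
            · exact (h1.trans hxz.symm)
          exact hpd x hx.1 y hy.1 hxy hy2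
        · exfalso
          simp only [if_neg hxz, if_pos hyz] at hxy
          have hx2 : p x = y := by
            rcases hx.2 with ⟨h1, _⟩ | ⟨h1, _⟩
            · exact absurd h1 hxz
            · exact (h1.trans hyz.symm)
          exact hpd y hy.1 x hx.1 hxy.symm hx2
        · simpa [if_neg hxz, if_neg hyz] using hxy
    have hRE : (R.erase S.center).card = R.card - 1 := Finset.card_erase_of_mem hzR
    have hRpos : 1 ≤ R.card := Finset.card_pos.mpr ⟨S.center, hzR⟩
    omega
  · have hT : ((X.erase r0).filter (fun x => S.memE x (p x))) = ∅ := by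
      rw [Finset.filter_eq_empty_iff]
      intro x hx hmem
      rcases hmem with ⟨h1, _⟩ | ⟨h1, _⟩
      · exact hzX (h1 ▸ Finset.mem_of_mem_erase hx)
      · exact hzX (h1 ▸ (hp x hx).1)
    have hP : (X.filter (fun x => S.memE x (g x))) ⊆ X.filter (fun v => S.memV v) := by
      intro x hx
      simp only [Finset.mem_filter] at hx ⊢
      obtain ⟨hxX, hmem⟩ := hx
      rcases hmem with ⟨h1, _⟩ | ⟨_, h2⟩
      · exact absurd (h1 ▸ hxX) hzX
      · exact ⟨hxX, Or.inr h2⟩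
    rw [hT]
    simpa using Finset.card_le_card hP

/-- The set defining `starCoverRate` is nonempty. -/
lemma packing_nonempty {V : Type*} [Fintype V] (G : SimpleGraph V)
    (hedge : ∃ u v, G.Adj u v) :
    { r : ℝ |
      ∃ (n : ℕ) (st : Fin n → GraphStar G) (w : Fin n → ℝ),
        (∀ i, 0 < w i) ∧
        (∀ u v, G.Adj u v → 1 ≤ ∑ i, (if (st i).memE u v then w i else 0)) ∧
        (∀ x : V, ∑ i, (if (st i).memV x then w i else 0) ≤ r) }.Nonempty := by
  obtain ⟨u0, v0, huv⟩ := hedge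
  set e : Fin (Fintype.card V) ≃ V := (Fintype.equivFin V).symm with he
  set st : Fin (Fintype.card V) → GraphStar G := fun i =>
    if h : (G.neighborFinset (e i)).Nonempty then
      ⟨e i, G.neighborFinset (e i), h,
        fun u hu => by rwa [SimpleGraph.mem_neighborFinset] at hu⟩
    else ⟨u0, {v0}, Finset.singleton_nonempty _,
        fun u hu => by rw [Finset.mem_singleton] at hu; subst hu; exact huv⟩ with hst
  refine ⟨(Fintype.card V : ℝ), Fintype.card V, st, fun _ => 1, fun _ => one_pos, ?_, ?_⟩
  · intro u v huvadj
    have hvn : v ∈ G.neighborFinset u := (SimpleGraph.mem_neighborFinset G u v).mpr huvadj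
    have hun : (G.neighborFinset u).Nonempty := ⟨v, hvn⟩
    set i := e.symm u with hi
    have hei : e i = u := e.apply_symm_apply u
    have hmem : (st i).memE u v := by
      rw [hst]
      simp only
      rw [hei, dif_pos hun]
      exact Or.inl ⟨rfl, hvn⟩
    have h0 : ∀ j : Fin (Fintype.card V), j ∈ Finset.univ →
        (0:ℝ) ≤ if (st j).memE u v then (1:ℝ) else 0 := fun j _ => by split <;> norm_num
    have hle := Finset.single_le_sum (f := fun j => if (st j).memE u v then (1:ℝ) else 0)
      h0 (Finset.mem_univ i)
    simp only [if_pos hmem] at hle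
    exact hle
  · intro x
    have h1 : (∑ i, if (st i).memV x then (1:ℝ) else 0)
        ≤ ∑ _i : Fin (Fintype.card V), (1:ℝ) :=
      Finset.sum_le_sum (fun j _ => by split <;> norm_num)
    exact h1.trans (by simp)

/-- for every finite simple graph with at least one edge,
`2 − 1/c(G) ≤ s(G)` where `c(G)` is the maximum core size and `s(G)` the star
cover rate. -/
theorem core_le_starCoverRate {V : Type*} [Fintype V] (G : SimpleGraph V)
    (hedge : ∃ u v, G.Adj u v) (c : ℕ)
    (hc : IsGreatest {n : ℕ | ∃ X : Finset V, IsCore G X ∧ X.card = n} c) :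
    2 - 1 / (c : ℝ) ≤ starCoverRate G := by
  obtain ⟨X, ⟨hconn, g, hg, hind⟩, hcard⟩ := hc.1
  -- X is nonempty, so c ≥ 1
  have hXne : X.Nonempty := by
    obtain ⟨⟨x0, hx0⟩⟩ := hconn.nonempty
    exact ⟨x0, by simpa using hx0⟩
  have hc1 : 1 ≤ c := by
    rw [← hcard]
    exact Finset.card_pos.mpr hXne
  obtain ⟨r0, hr0X⟩ := hXne
  have hr0X' : r0 ∈ (X : Set V) := by simpa using hr0X
  set G' := G.induce (X : Set V) with hG'
  set r0' : ↑(X : Set V) := ⟨r0, hr0X'⟩ with hr0'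
  -- parent function toward r0 via distances in the induced graph
  have key : ∀ v : ↑(X : Set V), v ≠ r0' →
      ∃ w, G'.Adj v w ∧ G'.dist w r0' < G'.dist v r0' :=
    fun v hv => exists_closer hconn r0' v hv
  set p : V → V := fun v =>
    if h : v ∈ X then
      (if h2 : (⟨v, by simpa using h⟩ : ↑(X : Set V)) ≠ r0' then
        ↑(Classical.choose (key ⟨v, by simpa using h⟩ h2)) else v)
    else v with hpdef
  set d : V → ℕ := fun v =>
    if h : v ∈ X then G'.dist ⟨v, by simpa using h⟩ r0' else 0 with hddef
  have hp_spec : ∀ x ∈ X.erase r0, p x ∈ X ∧ G.Adj x (p x) ∧ d (p x) < d x := by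
    intro x hx
    obtain ⟨hxne, hxX⟩ := Finset.mem_erase.mp hx
    have hxX' : x ∈ (X : Set V) := by simpa using hxX
    have h2 : (⟨x, hxX'⟩ : ↑(X : Set V)) ≠ r0' := by
      simp only [hr0', ne_eq, Subtype.mk.injEq]
      exact hxne
    obtain ⟨hadj, hdist⟩ := Classical.choose_spec (key ⟨x, hxX'⟩ h2)
    set w := Classical.choose (key ⟨x, hxX'⟩ h2) with hw
    have hpx : p x = ↑w := by
      simp only [hpdef]
      rw [dif_pos hxX, dif_pos h2]
    have hwX : (w : V) ∈ X := by
      have := w.2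
      simpa using this
    have hGadj : G.Adj x ↑w := by
      have := hadj
      rw [hG'] at this
      simpa [SimpleGraph.comap_adj] using this
    refine ⟨hpx ▸ hwX, hpx ▸ hGadj, ?_⟩
    have hdx : d x = G'.dist ⟨x, hxX'⟩ r0' := by
      simp only [hddef]
      rw [dif_pos hxX]
    have hdpx : d (p x) = G'.dist w r0' := by
      simp only [hddef]
      rw [hpx, dif_pos hwX]
    rw [hdx, hdpx]
    exact hdist
  have hp : ∀ x ∈ X.erase r0, p x ∈ X ∧ G.Adj x (p x) :=
    fun x hx => ⟨(hp_spec x hx).1, (hp_spec x hx).2.1⟩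
  have hpd : ∀ x ∈ X.erase r0, ∀ y ∈ X.erase r0, p x = y → p y ≠ x := by
    intro x hx y hy hxy hyx
    have h1 := (hp_spec x hx).2.2
    have h2 := (hp_spec y hy).2.2
    rw [hxy] at h1
    rw [hyx] at h2
    omega
  -- the main bound: every feasible packing value r satisfies 2 - 1/c ≤ r
  have hbound : ∀ r ∈ { r : ℝ |
      ∃ (n : ℕ) (st : Fin n → GraphStar G) (w : Fin n → ℝ),
        (∀ i, 0 < w i) ∧
        (∀ u v, G.Adj u v → 1 ≤ ∑ i, (if (st i).memE u v then w i else 0)) ∧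
        (∀ x : V, ∑ i, (if (st i).memV x then w i else 0) ≤ r) },
      2 - 1 / (c : ℝ) ≤ r := by
    intro r hr
    obtain ⟨n, st, w, hw, hcov, hload⟩ := hr
    have hc0 : (0 : ℝ) < (c : ℝ) := by exact_mod_cast hc1
    -- per-star inequality
    have hstar : ∀ i : Fin n,
        (∑ x ∈ X, if (st i).memE x (g x) then w i else 0)
          + (∑ x ∈ X.erase r0, if (st i).memE x (p x) then w i else 0)
        ≤ ∑ v ∈ X, if (st i).memV v then w i else 0 := by
      intro i
      have hA : (∑ x ∈ X, if (st i).memE x (g x) then w i else 0)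
          = ((X.filter (fun x => (st i).memE x (g x))).card : ℝ) * w i := by
        rw [← Finset.sum_filter, Finset.sum_const, nsmul_eq_mul]
      have hB : (∑ x ∈ X.erase r0, if (st i).memE x (p x) then w i else 0)
          = (((X.erase r0).filter (fun x => (st i).memE x (p x))).card : ℝ) * w i := by
        rw [← Finset.sum_filter, Finset.sum_const, nsmul_eq_mul]
      have hC : (∑ v ∈ X, if (st i).memV v then w i else 0)
          = ((X.filter (fun v => (st i).memV v)).card : ℝ) * w i := by
        rw [← Finset.sum_filter, Finset.sum_const, nsmul_eq_mul]
      rw [hA, hB, hC, ← add_mul]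
      apply mul_le_mul_of_nonneg_right _ (hw i).le
      have := star_count G X g p r0 hg hp hpd (st i)
      exact_mod_cast this
    -- sum over stars
    have hsum := Finset.sum_le_sum (fun i (_ : i ∈ Finset.univ) => hstar i)
    rw [Finset.sum_add_distrib] at hsum
    have hA2 : (c : ℝ) ≤ ∑ i : Fin n, ∑ x ∈ X, if (st i).memE x (g x) then w i else 0 := by
      rw [Finset.sum_comm]
      calc (c : ℝ) = ∑ _x ∈ X, (1 : ℝ) := by simp [hcard]
      _ ≤ _ := Finset.sum_le_sum (fun x hx => hcov x (g x) (hg x hx).2.1)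
    have hB2 : ((c : ℝ) - 1) ≤
        ∑ i : Fin n, ∑ x ∈ X.erase r0, if (st i).memE x (p x) then w i else 0 := by
      rw [Finset.sum_comm]
      have hce : ((X.erase r0).card : ℝ) = (c : ℝ) - 1 := by
        rw [Finset.card_erase_of_mem hr0X, hcard]
        have : (1:ℕ) ≤ c := hc1
        push_cast [Nat.cast_sub this]
        ring
      calc (c : ℝ) - 1 = ∑ _x ∈ X.erase r0, (1 : ℝ) := by simp [hce]
      _ ≤ _ := Finset.sum_le_sum (fun x hx => hcov x (p x) (hp x hx).2)
    have hC2 : (∑ i : Fin n, ∑ v ∈ X, if (st i).memV v then w i else 0) ≤ (c : ℝ) * r := by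
      rw [Finset.sum_comm]
      calc ∑ v ∈ X, ∑ i : Fin n, (if (st i).memV v then w i else 0)
          ≤ ∑ _v ∈ X, r := Finset.sum_le_sum (fun v _ => hload v)
      _ = (c : ℝ) * r := by simp [hcard, mul_comm]
    have hmain : (c : ℝ) + ((c : ℝ) - 1) ≤ (c : ℝ) * r := by linarith
    have hdiv : (2 * (c : ℝ) - 1) / (c : ℝ) ≤ r := by
      rw [div_le_iff₀ hc0]
      linarith
    have heq : (2 * (c : ℝ) - 1) / (c : ℝ) = 2 - 1 / (c : ℝ) := by
      field_simp
    linarith [heq ▸ hdiv]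
  exact le_csInf (packing_nonempty G hedge) hbound
end
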